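/- arXiv:2205.08038 — 4 statements merged into one kernel-verified Lean document; each statement's English description precedes it below -/
import Mathlib

section
/- Let f : ℝⁿ → ℝ be twice continuously differentiable, let x* ∈ ℝⁿ satisfy ∇f(x*) = 0, assume the Hessian ∇²f(x*) is invertible and that ∇²f(·) is differentiable in a neighborhood of x*. Let ε : ℝⁿ → [0,∞) be a function that is constant in a neighborhood of x* and satisfies ∇²f(x*) + ε(x*)·I ≻ 0. If x* is a local minimum of f (equivalently, given the invertibility assumption, ∇²f(x*) ≻ 0), then x* is a locally asymptotically stable equilibrium of the modified Newton iteration x⁺ = x − (∇²f(x) + ε(x)·I)⁻¹ ∇f(x). -/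
/-!
At a local minimum the Hessian `H = ∇²f(x*)` is positive semidefinite (restrict `f` to lines
through `x*` and use the one-dimensional second-derivative test), hence positive definite, being
invertible. As `∇f(x*) = 0` and `ε` is locally constant, the iteration map is differentiable at
`x*` even though `x ↦ (∇²f(x) + εI)⁻¹` is merely continuous, with Jacobian
`I - (H + εI)⁻¹ H = ε (H + εI)⁻¹`. Coercivity `⟪w, H w⟫ ≥ m ‖w‖²` bounds the norm of this
Jacobian by `ε / (ε + m) < 1`, so the map contracts a ball around `x*`, which gives both
stability and geometric convergence.
-/

open Filter Topology Matrix

noncomputable section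

/-- The `i`-th partial derivative of `f` at `x`. -/
def pd {n : ℕ} (f : EuclideanSpace ℝ (Fin n) → ℝ) (x : EuclideanSpace ℝ (Fin n)) (i : Fin n) : ℝ :=
  fderiv ℝ f x (EuclideanSpace.single i 1)

/-- The Hessian matrix of `f` at `x`. -/
def hessian {n : ℕ} (f : EuclideanSpace ℝ (Fin n) → ℝ) (x : EuclideanSpace ℝ (Fin n)) :
    Matrix (Fin n) (Fin n) ℝ :=
  Matrix.of fun i j => pd (fun y => pd f y j) x i

/-- The modified Newton iteration map `x ↦ x - (∇²f(x) + ε(x)·I)⁻¹ ∇f(x)`. -/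
def newtonMap {n : ℕ} (f : EuclideanSpace ℝ (Fin n) → ℝ) (ε : EuclideanSpace ℝ (Fin n) → ℝ)
    (x : EuclideanSpace ℝ (Fin n)) : EuclideanSpace ℝ (Fin n) :=
  x - (WithLp.equiv 2 (Fin n → ℝ)).symm
    ((hessian f x + ε x • (1 : Matrix (Fin n) (Fin n) ℝ))⁻¹.mulVec
      (WithLp.equiv 2 (Fin n → ℝ) (gradient f x)))

/-- Lyapunov stability of a fixed point of the discrete iteration `z⁺ = T(z)`. -/
def StableFixedPt {Z : Type*} [NormedAddCommGroup Z] (T : Z → Z) (z : Z) : Prop :=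
  ∀ η > 0, ∃ δ > 0, ∀ z₀, ‖z₀ - z‖ < δ → ∀ k : ℕ, ‖T^[k] z₀ - z‖ < η

/-- Local asymptotic stability: fixed point, stability, and local attractivity. -/
def IsLASFixedPt {Z : Type*} [NormedAddCommGroup Z] (T : Z → Z) (z : Z) : Prop :=
  Function.IsFixedPt T z ∧ StableFixedPt T z ∧
    ∃ δ > 0, ∀ z₀, ‖z₀ - z‖ < δ → Tendsto (fun k => T^[k] z₀) atTop (𝓝 z)

open scoped RealInnerProductSpace

section Contraction

variable {Z : Type*} [NormedAddCommGroup Z] {T : Z → Z} {z : Z}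

theorem isLASFixedPt_of_eventually_norm_sub_le {K : ℝ} (hz : Function.IsFixedPt T z)
    (hK₀ : 0 ≤ K) (hK : K < 1) (hT : ∀ᶠ x in 𝓝 z, ‖T x - z‖ ≤ K * ‖x - z‖) :
    IsLASFixedPt T z := by
  obtain ⟨δ, hδ, hball⟩ := Metric.eventually_nhds_iff.1 hT
  have hpow : ∀ k : ℕ, ∀ r, 0 ≤ r → K ^ k * r ≤ r := fun k r hr =>
    mul_le_of_le_one_left hr (pow_le_one₀ hK₀ hK.le)
  have hiter : ∀ x, ‖x - z‖ < δ → ∀ k : ℕ, ‖T^[k] x - z‖ ≤ K ^ k * ‖x - z‖ := by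
    intro x hx k
    induction k with
    | zero => simp
    | succ k ih =>
      have hk : dist (T^[k] x) z < δ := by
        rw [dist_eq_norm]
        exact (ih.trans (hpow k _ (norm_nonneg _))).trans_lt hx
      calc ‖T^[k + 1] x - z‖ ≤ K * ‖T^[k] x - z‖ := by
            rw [Function.iterate_succ_apply']
            exact hball hk
        _ ≤ K * (K ^ k * ‖x - z‖) := mul_le_mul_of_nonneg_left ih hK₀
        _ = K ^ (k + 1) * ‖x - z‖ := by ring
  refine ⟨hz, fun η hη => ⟨min δ η, lt_min hδ hη, fun x hx k => ?_⟩, δ, hδ, fun x hx => ?_⟩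
  · calc ‖T^[k] x - z‖ ≤ K ^ k * ‖x - z‖ := hiter x (hx.trans_le (min_le_left _ _)) k
      _ ≤ ‖x - z‖ := hpow k _ (norm_nonneg _)
      _ < η := hx.trans_le (min_le_right _ _)
  · rw [tendsto_iff_norm_sub_tendsto_zero]
    refine squeeze_zero (fun k => norm_nonneg _) (hiter x hx) ?_
    simpa using (tendsto_pow_atTop_nhds_zero_of_lt_one hK₀ hK).mul_const ‖x - z‖

end Contraction

section Linearization

variable {E : Type*} [NormedAddCommGroup E] [NormedSpace ℝ E] {T : E → E} {L : E →L[ℝ] E} {z : E}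

theorem HasFDerivAt.eventually_norm_sub_le {K : ℝ} (hT : HasFDerivAt T L z)
    (hz : Function.IsFixedPt T z) (hK : ‖L‖ < K) :
    ∀ᶠ x in 𝓝 z, ‖T x - z‖ ≤ K * ‖x - z‖ := by
  filter_upwards [hT.isLittleO.def (sub_pos.2 hK)] with x hx
  calc ‖T x - z‖ = ‖(T x - T z - L (x - z)) + L (x - z)‖ := by rw [hz.eq]; abel_nf
    _ ≤ (K - ‖L‖) * ‖x - z‖ + ‖L‖ * ‖x - z‖ := norm_add_le_of_le hx (L.le_opNorm _)
    _ = K * ‖x - z‖ := by ring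

theorem isLASFixedPt_of_hasFDerivAt_of_norm_lt_one (hz : Function.IsFixedPt T z)
    (hT : HasFDerivAt T L z) (hL : ‖L‖ < 1) : IsLASFixedPt T z :=
  isLASFixedPt_of_eventually_norm_sub_le hz (by positivity) (by linarith)
    (hT.eventually_norm_sub_le hz (K := (1 + ‖L‖) / 2) (by linarith))

end Linearization

open Asymptotics in
theorem HasFDerivAt.clm_apply_of_eq_zero {𝕜 E F G : Type*} [NontriviallyNormedField 𝕜]
    [NormedAddCommGroup E] [NormedSpace 𝕜 E] [NormedAddCommGroup F] [NormedSpace 𝕜 F]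
    [NormedAddCommGroup G] [NormedSpace 𝕜 G] {A : E → F →L[𝕜] G} {g : E → F} {g' : E →L[𝕜] F}
    {x : E} (hg : HasFDerivAt g g' x) (hg0 : g x = 0) (hA : ContinuousAt A x) :
    HasFDerivAt (fun y => A y (g y)) ((A x).comp g') x := by
  -- `A y (g y) = A x (g y) + (A y - A x) (g y)`, and the last term is `o(1) • O(y - x)`.
  have hAx : (fun y => A y - A x) =o[𝓝 x] fun _ => (1 : ℝ) :=
    (isLittleO_one_iff ℝ).2 (tendsto_sub_nhds_zero_iff.2 hA)
  have hgx : g =O[𝓝 x] fun y => y - x := by simpa [hg0] using hg.isBigO_sub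
  have hbound : (fun y => (A y - A x) (g y)) =O[𝓝 x] fun y => ‖A y - A x‖ * ‖g y‖ :=
    .of_bound 1 (.of_forall fun y => by simpa using (A y - A x).le_opNorm (g y))
  have hrem : HasFDerivAt (fun y => (A y - A x) (g y)) (0 : E →L[𝕜] G) x := by
    refine hasFDerivAt_iff_isLittleO.2 ?_
    simpa [hg0] using (hbound.trans_isLittleO (hAx.norm_left.mul_isBigO hgx.norm_norm)).norm_right
  refine ((((A x).hasFDerivAt.comp x hg).add hrem).congr_fderiv
    (add_zero ((A x).comp g'))).congr_of_eventuallyEq (.of_forall fun y => ?_)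
  simp

section Coercive

variable {E : Type*} [NormedAddCommGroup E] [InnerProductSpace ℝ E]

theorem ContinuousLinearMap.exists_pos_mul_norm_sq_le_inner [FiniteDimensional ℝ E]
    (H : E →L[ℝ] E) (hH : ∀ w ≠ 0, 0 < ⟪w, H w⟫) : ∃ m > 0, ∀ w, m * ‖w‖ ^ 2 ≤ ⟪w, H w⟫ := by
  rcases subsingleton_or_nontrivial E with hE | hE
  · exact ⟨1, one_pos, fun w => by simp [Subsingleton.elim w 0]⟩
  obtain ⟨u, hu, hmin⟩ := (isCompact_sphere (0 : E) 1).exists_isMinOn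
    (NormedSpace.sphere_nonempty.2 zero_le_one)
    (continuous_id.inner (𝕜 := ℝ) H.continuous).continuousOn
  refine ⟨⟪u, H u⟫, hH u (ne_zero_of_mem_sphere one_ne_zero ⟨u, hu⟩), fun w => ?_⟩
  rcases eq_or_ne w 0 with rfl | hw
  · simp
  have hw' : 0 < ‖w‖ := norm_pos_iff.2 hw
  have hunit : ‖w‖⁻¹ • w ∈ Metric.sphere (0 : E) 1 := by simp [norm_smul, hw'.ne']
  have hu_le := isMinOn_iff.1 hmin _ hunit
  simp only [id_eq, map_smul, real_inner_smul_left, real_inner_smul_right] at hu_le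
  calc ⟪u, H u⟫ * ‖w‖ ^ 2 ≤ ‖w‖⁻¹ * (‖w‖⁻¹ * ⟪w, H w⟫) * ‖w‖ ^ 2 := by gcongr
    _ = ⟪w, H w⟫ := by field_simp

theorem ContinuousLinearMap.norm_smul_lt_one_of_add_smul_one_mul_eq_one {H R : E →L[ℝ] E} {m ε : ℝ}
    (hm : 0 < m) (hH : ∀ w, m * ‖w‖ ^ 2 ≤ ⟪w, H w⟫) (hε : 0 ≤ ε) (hR : (H + ε • 1) * R = 1) :
    ‖ε • R‖ < 1 := by
  have hbound : ∀ v, ‖(ε • R) v‖ ≤ ε / (m + ε) * ‖v‖ := by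
    intro v
    set w := R v
    have hv : H w + ε • w = v := by simpa using congrArg (· v) hR
    have hcoer : (m + ε) * ‖w‖ ^ 2 ≤ ‖w‖ * ‖v‖ := calc
      (m + ε) * ‖w‖ ^ 2 ≤ ⟪w, H w⟫ + ⟪w, ε • w⟫ := by
        rw [real_inner_smul_right, real_inner_self_eq_norm_sq]; linarith [hH w]
      _ = ⟪w, v⟫ := by rw [← inner_add_right, hv]
      _ ≤ ‖w‖ * ‖v‖ := real_inner_le_norm w v
    have hw : (m + ε) * ‖w‖ ≤ ‖v‖ := by
      rcases (norm_nonneg w).eq_or_lt with h | h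
      · rw [← h]; simp
      · nlinarith
    rw [_root_.smul_apply, norm_smul, Real.norm_of_nonneg hε, div_mul_eq_mul_div,
      le_div_iff₀ (by positivity)]
    nlinarith
  calc ‖ε • R‖ ≤ ε / (m + ε) := opNorm_le_bound _ (by positivity) hbound
    _ < 1 := (div_lt_one (by positivity)).2 (by linarith)

end Coercive

namespace Matrix

variable {ι : Type*} [DecidableEq ι]

theorem PosDef.add_smul_one {H : Matrix ι ι ℝ} (hH : H.PosDef) {ε : ℝ} (hε : 0 ≤ ε) :
    (H + ε • 1).PosDef :=
  hH.add_posSemidef (PosSemidef.one.smul hε)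

variable [Fintype ι]

theorem one_sub_inv_mul_eq_smul_inv {R : Type*} [CommRing R] {H : Matrix ι ι R} {c : R}
    (h : IsUnit (H + c • 1).det) : 1 - (H + c • 1)⁻¹ * H = c • (H + c • 1)⁻¹ := by
  nth_rewrite 1 [← nonsing_inv_mul _ h]
  rw [← Matrix.mul_sub, add_sub_cancel_left, Matrix.mul_smul, Matrix.mul_one]

theorem continuous_toEuclideanCLM : Continuous (toEuclideanCLM (𝕜 := ℝ) (n := ι)) :=
  LinearMap.continuous_of_finiteDimensional
    (toEuclideanCLM (𝕜 := ℝ) (n := ι)).toAlgEquiv.toLinearEquiv.toLinearMap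

theorem PosDef.norm_smul_toEuclideanCLM_inv_lt_one {H : Matrix ι ι ℝ} (hH : H.PosDef) {ε : ℝ}
    (hε : 0 ≤ ε) : ‖ε • toEuclideanCLM (𝕜 := ℝ) (n := ι) (H + ε • 1)⁻¹‖ < 1 := by
  obtain ⟨m, hm, hcoer⟩ := (toEuclideanCLM (𝕜 := ℝ) H).exists_pos_mul_norm_sq_le_inner
    fun w hw => by
      rw [inner_toEuclideanCLM]
      simpa using hH.dotProduct_mulVec_pos (x := w.ofLp) (by simpa using hw)
  refine ContinuousLinearMap.norm_smul_lt_one_of_add_smul_one_mul_eq_one hm hcoer hε ?_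
  rw [← map_one (toEuclideanCLM (𝕜 := ℝ) (n := ι)), ← map_smul, ← map_add, ← map_mul,
    mul_nonsing_inv _ (hH.add_smul_one hε).det_pos.ne'.isUnit]

end Matrix

theorem IsLocalMin.deriv_deriv_nonneg {g : ℝ → ℝ} {a : ℝ} (h : IsLocalMin g a)
    (hc : ContinuousAt g a) : 0 ≤ deriv (deriv g) a := by
  by_contra! hneg
  have hmax : IsLocalMax g a := isLocalMax_of_deriv_deriv_neg hneg h.deriv_eq_zero hc
  have hconst : g =ᶠ[𝓝 a] fun _ => g a := by
    filter_upwards [h, hmax] with t h₁ h₂ using le_antisymm h₂ h₁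
  rw [hconst.deriv.deriv_eq] at hneg
  simp at hneg

theorem IsLocalMin.fderiv_fderiv_apply_self_nonneg {E : Type*} [NormedAddCommGroup E]
    [NormedSpace ℝ E] {f : E → ℝ} {x : E} (h : IsLocalMin f x) (hf : ContDiffAt ℝ 2 f x) (v : E) :
    0 ≤ fderiv ℝ (fderiv ℝ f) x v v := by
  set γ : ℝ → E := fun t => x + t • v
  have hγ : ∀ t, HasDerivAt γ v t := fun t => by
    simpa [γ] using ((hasDerivAt_id' t).smul_const v).const_add x
  have hγ0 : γ 0 = x := by simp [γ]
  have hγc : ContinuousAt γ 0 := (hγ 0).continuousAt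
  have hdiff : ∀ᶠ t in 𝓝 (0 : ℝ), DifferentiableAt ℝ f (γ t) := by
    refine hγc.eventually ?_
    rw [hγ0]
    exact (hf.eventually (by simp)).mono fun y hy => hy.differentiableAt (by simp)
  have hderiv : deriv (f ∘ γ) =ᶠ[𝓝 0] fun t => fderiv ℝ f (γ t) v := by
    filter_upwards [hdiff] with t ht using (ht.hasFDerivAt.comp_hasDerivAt t (hγ t)).deriv
  have hderiv2 : HasDerivAt (fun t => fderiv ℝ f (γ t) v) (fderiv ℝ (fderiv ℝ f) x v v) 0 := by
    have hf' : HasFDerivAt (fderiv ℝ f) (fderiv ℝ (fderiv ℝ f) x) (γ 0) := by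
      rw [hγ0]
      exact ((hf.fderiv_right (m := 1) le_rfl).differentiableAt one_ne_zero).hasFDerivAt
    simpa using (hf'.comp_hasDerivAt 0 (hγ 0)).clm_apply (hasDerivAt_const 0 v)
  have hmin : IsLocalMin (f ∘ γ) 0 := by
    rw [← hγ0] at h
    exact h.comp_continuous hγc
  have hfc : ContinuousAt f (γ 0) := by rw [hγ0]; exact hf.continuousAt
  calc 0 ≤ deriv (deriv (f ∘ γ)) 0 := hmin.deriv_deriv_nonneg (hfc.comp hγc)
    _ = fderiv ℝ (fderiv ℝ f) x v v := by rw [hderiv.deriv_eq, hderiv2.deriv]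

theorem HasFDerivAt.inner_apply_eq_fderiv_fderiv {F : Type*} [NormedAddCommGroup F]
    [InnerProductSpace ℝ F] [CompleteSpace F] {f : F → ℝ} {G : F →L[ℝ] F} {x : F} (hG : HasFDerivAt (gradient f) G x)
    (hf : DifferentiableAt ℝ (fderiv ℝ f) x) (v w : F) :
    ⟪G v, w⟫ = fderiv ℝ (fderiv ℝ f) x v w := by
  have hinner : HasFDerivAt (fun y => fderiv ℝ f y w) ((innerSL ℝ w).comp G) x := by
    refine ((innerSL ℝ w).hasFDerivAt.comp x hG).congr_of_eventuallyEq (.of_forall fun y => ?_)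
    simp
  have happly : HasFDerivAt (fun y => fderiv ℝ f y w) ((fderiv ℝ (fderiv ℝ f) x).flip w) x := by
    simpa using hf.hasFDerivAt.clm_apply (hasFDerivAt_const w x)
  simpa [real_inner_comm] using congrArg (· v) (hinner.unique happly)

section Hessian

variable {n : ℕ} {f : EuclideanSpace ℝ (Fin n) → ℝ} {x : EuclideanSpace ℝ (Fin n)}

theorem hessian_apply (hf : DifferentiableAt ℝ (fderiv ℝ f) x) (i j : Fin n) :
    hessian f x i j
      = fderiv ℝ (fderiv ℝ f) x (EuclideanSpace.single i 1) (EuclideanSpace.single j 1) := by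
  simp [hessian, pd, fderiv_clm_apply hf (differentiableAt_const _)]

theorem hessian_isHermitian (hf : ContDiffAt ℝ 2 f x) : (hessian f x).IsHermitian := by
  have hD := (hf.fderiv_right (m := 1) le_rfl).differentiableAt one_ne_zero
  refine IsHermitian.ext fun i j => ?_
  simp [hessian_apply hD, (hf.isSymmSndFDerivAt (by simp)) (EuclideanSpace.single i 1)]

theorem ContDiff.continuous_hessian (hf : ContDiff ℝ 2 f) : Continuous (hessian f) := by
  have hD := hf.fderiv_right (m := 1) le_rfl
  refine continuous_matrix fun i j => ?_
  simp_rw [hessian_apply (hD.differentiable one_ne_zero _)]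
  exact ((hD.continuous_fderiv one_ne_zero).clm_apply continuous_const).clm_apply continuous_const

theorem gradient_apply_eq_pd (y : EuclideanSpace ℝ (Fin n)) (j : Fin n) :
    gradient f y j = pd f y j := by
  simp [pd, ← inner_gradient_left, EuclideanSpace.inner_single_right]

theorem hasFDerivAt_gradient (hf : ContDiffAt ℝ 2 f x) :
    HasFDerivAt (gradient f) (toEuclideanCLM (𝕜 := ℝ) (hessian f x)) x := by
  have hD := (hf.fderiv_right (m := 1) le_rfl).differentiableAt one_ne_zero
  rw [← hasFDerivWithinAt_univ, hasFDerivWithinAt_piLp]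
  intro j
  rw [hasFDerivWithinAt_univ]
  have hpd : DifferentiableAt ℝ (fun y => pd f y j) x := hD.clm_apply (differentiableAt_const _)
  refine (hpd.hasFDerivAt.congr_fderiv ?_).congr_of_eventuallyEq
    (.of_forall fun y => gradient_apply_eq_pd y j)
  refine ContinuousLinearMap.coe_injective ((EuclideanSpace.basisFun _ ℝ).toBasis.ext fun i => ?_)
  simp only [OrthonormalBasis.coe_toBasis, EuclideanSpace.basisFun_apply]
  -- `fderiv ℝ (pd f · j) x (e i)` is `hessian f x i j` by definition.
  change hessian f x i j = _
  simpa using (hessian_isHermitian hf).apply j i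

theorem IsLocalMin.hessian_posSemidef (h : IsLocalMin f x) (hf : ContDiffAt ℝ 2 f x) :
    (hessian f x).PosSemidef := by
  have hD := (hf.fderiv_right (m := 1) le_rfl).differentiableAt one_ne_zero
  refine PosSemidef.of_dotProduct_mulVec_nonneg (hessian_isHermitian hf) fun v => ?_
  set w := WithLp.toLp 2 v
  have hw := (hasFDerivAt_gradient hf).inner_apply_eq_fderiv_fderiv hD w w
  rw [real_inner_comm, inner_toEuclideanCLM] at hw
  simpa [w, hw] using h.fderiv_fderiv_apply_self_nonneg hf w

end Hessian

section NewtonMap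

variable {n : ℕ} {f ε : EuclideanSpace ℝ (Fin n) → ℝ} {xs : EuclideanSpace ℝ (Fin n)}

theorem isFixedPt_newtonMap (hgrad : gradient f xs = 0) :
    Function.IsFixedPt (newtonMap f ε) xs := by
  simp [Function.IsFixedPt, newtonMap, hgrad]

theorem hasFDerivAt_newtonMap (hf : ContDiff ℝ 2 f) (hgrad : gradient f xs = 0)
    (hε : ∀ᶠ y in 𝓝 xs, ε y = ε xs) (hdet : (hessian f xs + ε xs • 1).det ≠ 0) :
    HasFDerivAt (newtonMap f ε)
      (ε xs • toEuclideanCLM (𝕜 := ℝ) (hessian f xs + ε xs • 1)⁻¹) xs := by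
  have hinv : ContinuousAt (fun x => toEuclideanCLM (𝕜 := ℝ) (hessian f x + ε xs • 1)⁻¹) xs :=
    continuous_toEuclideanCLM.continuousAt.comp <|
      (continuousAt_matrix_inv _ (NormedRing.inverse_continuousAt (Units.mk0 _ hdet))).comp
        (f := fun x => hessian f x + ε xs • 1)
        (hf.continuous_hessian.add continuous_const).continuousAt
  have hT := (hasFDerivAt_id xs).sub
    ((hasFDerivAt_gradient hf.contDiffAt).clm_apply_of_eq_zero hgrad hinv)
  refine (hT.congr_fderiv ?_).congr_of_eventuallyEq ?_
  · rw [← ContinuousLinearMap.one_def, ← ContinuousLinearMap.mul_def, ← map_mul,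
      ← map_one (toEuclideanCLM (𝕜 := ℝ) (n := Fin n)), ← map_sub,
      one_sub_inv_mul_eq_smul_inv hdet.isUnit, map_smul]
  · filter_upwards [hε] with y hy
    simp only [newtonMap, hy]
    rfl

end NewtonMap

theorem newton_LAS_of_localMin_general {n : ℕ}
    (f : EuclideanSpace ℝ (Fin n) → ℝ) (xs : EuclideanSpace ℝ (Fin n))
    (ε : EuclideanSpace ℝ (Fin n) → ℝ)
    (hf : ContDiff ℝ 2 f)
    (hgrad : gradient f xs = 0)
    (hinv : IsUnit (hessian f xs).det)
    (hε0 : ∀ x, 0 ≤ ε x)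
    (hεconst : ∀ᶠ y in 𝓝 xs, ε y = ε xs)
    (hmin : ∃ δ > 0, ∀ x, ‖x - xs‖ < δ → f xs ≤ f x) :
    IsLASFixedPt (newtonMap f ε) xs := by
  obtain ⟨δ, hδ, hδmin⟩ := hmin
  have hloc : IsLocalMin f xs :=
    Metric.eventually_nhds_iff.2 ⟨δ, hδ, fun y hy => hδmin y (by rwa [← dist_eq_norm])⟩
  have hH : (hessian f xs).PosDef :=
    (hloc.hessian_posSemidef hf.contDiffAt).posDef_iff_det_ne_zero.2 hinv.ne_zero
  exact isLASFixedPt_of_hasFDerivAt_of_norm_lt_one (isFixedPt_newtonMap hgrad)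
    (hasFDerivAt_newtonMap hf hgrad hεconst (hH.add_smul_one (hε0 xs)).det_pos.ne')
    (hH.norm_smul_toEuclideanCLM_inv_lt_one (hε0 xs))

/-- **Theorem (stability part)**: at an equilibrium point of the modified Newton iteration
that is a local minimum, the iteration is locally asymptotically stable. -/
theorem newton_LAS_of_localMin {n : ℕ}
    (f : EuclideanSpace ℝ (Fin n) → ℝ) (xs : EuclideanSpace ℝ (Fin n))
    (ε : EuclideanSpace ℝ (Fin n) → ℝ)
    (hf : ContDiff ℝ 2 f)
    (hgrad : gradient f xs = 0)
    (hinv : IsUnit (hessian f xs).det)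
    (hHdiff : ∀ᶠ y in 𝓝 xs, ∀ i j, DifferentiableAt ℝ (fun w => hessian f w i j) y)
    (hε0 : ∀ x, 0 ≤ ε x)
    (hεconst : ∀ᶠ y in 𝓝 xs, ε y = ε xs)
    (hpd : (hessian f xs + ε xs • (1 : Matrix (Fin n) (Fin n) ℝ)).PosDef)
    (hmin : ∃ δ > 0, ∀ x, ‖x - xs‖ < δ → f xs ≤ f x) :
    IsLASFixedPt (newtonMap f ε) xs :=
  newton_LAS_of_localMin_general f xs ε hf hgrad hinv hε0 hεconst hmin
end
end

section
/- Let f : ℝ^{n_x} × ℝ^{n_y} → ℝ be twice continuously differentiable and let (x*, y*) satisfy ∇ₓf(x*, y*) = 0 and ∇_yf(x*, y*) = 0. If the inertia of ∇_{yy}f(x*, y*) equals (0, n_y, 0) (i.e., ∇_{yy}f(x*, y*) is negative definite) and the inertia of the full Hessian ∇_{zz}f(x*, y*) = [[∇ₓₓf, ∇ₓᵧf], [∇ᵧₓf, ∇ᵧᵧf]](x*, y*) equals (n_x, n_y, 0), then (x*, y*) is a local minmax of min_x max_y f(x, y). -/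
open Filter Topology Matrix

noncomputable section

variable {nx ny : ℕ}

/-- Partial derivative of `f(x,y)` in the `i`-th `x`-coordinate. -/
def pdX (f : EuclideanSpace ℝ (Fin nx) → EuclideanSpace ℝ (Fin ny) → ℝ)
    (x : EuclideanSpace ℝ (Fin nx)) (y : EuclideanSpace ℝ (Fin ny)) (i : Fin nx) : ℝ :=
  fderiv ℝ (fun x' => f x' y) x (EuclideanSpace.single i 1)

/-- Partial derivative of `f(x,y)` in the `j`-th `y`-coordinate. -/
def pdY (f : EuclideanSpace ℝ (Fin nx) → EuclideanSpace ℝ (Fin ny) → ℝ)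
    (x : EuclideanSpace ℝ (Fin nx)) (y : EuclideanSpace ℝ (Fin ny)) (j : Fin ny) : ℝ :=
  fderiv ℝ (fun y' => f x y') y (EuclideanSpace.single j 1)

/-- The block `∇ₓₓf(x,y)`. -/
def Hxx (f : EuclideanSpace ℝ (Fin nx) → EuclideanSpace ℝ (Fin ny) → ℝ)
    (x : EuclideanSpace ℝ (Fin nx)) (y : EuclideanSpace ℝ (Fin ny)) :
    Matrix (Fin nx) (Fin nx) ℝ :=
  Matrix.of fun i j => fderiv ℝ (fun x' => pdX f x' y j) x (EuclideanSpace.single i 1)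

/-- The block `∇ₓᵧf(x,y)`. -/
def Hxy (f : EuclideanSpace ℝ (Fin nx) → EuclideanSpace ℝ (Fin ny) → ℝ)
    (x : EuclideanSpace ℝ (Fin nx)) (y : EuclideanSpace ℝ (Fin ny)) :
    Matrix (Fin nx) (Fin ny) ℝ :=
  Matrix.of fun i j => fderiv ℝ (fun x' => pdY f x' y j) x (EuclideanSpace.single i 1)

/-- The block `∇ᵧₓf(x,y)`. -/
def Hyx (f : EuclideanSpace ℝ (Fin nx) → EuclideanSpace ℝ (Fin ny) → ℝ)
    (x : EuclideanSpace ℝ (Fin nx)) (y : EuclideanSpace ℝ (Fin ny)) :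
    Matrix (Fin ny) (Fin nx) ℝ :=
  Matrix.of fun j i => fderiv ℝ (fun y' => pdX f x y' i) y (EuclideanSpace.single j 1)

/-- The block `∇ᵧᵧf(x,y)`. -/
def Hyy (f : EuclideanSpace ℝ (Fin nx) → EuclideanSpace ℝ (Fin ny) → ℝ)
    (x : EuclideanSpace ℝ (Fin nx)) (y : EuclideanSpace ℝ (Fin ny)) :
    Matrix (Fin ny) (Fin ny) ℝ :=
  Matrix.of fun i j => fderiv ℝ (fun y' => pdY f x y' j) y (EuclideanSpace.single i 1)

/-- The full Hessian `∇_zz f(x,y) = [[∇ₓₓf, ∇ₓᵧf],[∇ᵧₓf, ∇ᵧᵧf]]`. -/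
def Hzz (f : EuclideanSpace ℝ (Fin nx) → EuclideanSpace ℝ (Fin ny) → ℝ)
    (x : EuclideanSpace ℝ (Fin nx)) (y : EuclideanSpace ℝ (Fin ny)) :
    Matrix (Fin nx ⊕ Fin ny) (Fin nx ⊕ Fin ny) ℝ :=
  Matrix.fromBlocks (Hxx f x y) (Hxy f x y) (Hyx f x y) (Hyy f x y)

/-- The real symmetric matrix `A` has inertia `t = (n₊, n₋, n₀)`. -/
def HasInertia {ι : Type*} [Fintype ι] [DecidableEq ι] (A : Matrix ι ι ℝ)
    (t : ℕ × ℕ × ℕ) : Prop :=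
  ∃ hA : A.IsHermitian,
    Nat.card {i // 0 < hA.eigenvalues i} = t.1 ∧
    Nat.card {i // hA.eigenvalues i < 0} = t.2.1 ∧
    Nat.card {i // hA.eigenvalues i = 0} = t.2.2

/-- `(xs, ys)` is a local minmax point of `min_x max_y f(x,y)`. -/
def IsLocalMinMax (f : EuclideanSpace ℝ (Fin nx) → EuclideanSpace ℝ (Fin ny) → ℝ)
    (xs : EuclideanSpace ℝ (Fin nx)) (ys : EuclideanSpace ℝ (Fin ny)) : Prop :=
  ∃ δ₀ > (0 : ℝ), ∃ h : ℝ → ℝ,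
    (∀ δ ∈ Set.Ioc (0 : ℝ) δ₀, 0 < h δ) ∧
    Tendsto h (𝓝[>] 0) (𝓝 0) ∧
    ∀ δ ∈ Set.Ioc (0 : ℝ) δ₀, ∀ x y, ‖x - xs‖ ≤ δ → ‖y - ys‖ ≤ h δ →
      f xs y ≤ f xs ys ∧ ∃ yt, ‖yt - ys‖ ≤ h δ ∧ f xs ys ≤ f x yt

/-! At a critical point, `f (x* + u) (y* + v) - f x* y* = ½ q (u, v) + o(‖(u, v)‖²)`, where `q`
is the quadratic form of `∇_zz f`. Since `∇ᵧᵧ f` is negative definite, `q (0, v) ≤ -a ‖v‖²`, so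
`y*` is a local maximiser of `f x* ·`. The `n_x` eigenvectors of `∇_zz f` with positive eigenvalues
span a subspace `P` on which `q ≥ b ‖·‖²`; it meets `0 × ℝ^{n_y}`, where `q ≤ 0`, only in `0`, so
for dimension reasons `P` is the graph of a linear map `L`. The response `ỹ = y* + L (x - x*)` then
gives `f x ỹ ≥ f x* y*` with `‖ỹ - y*‖ ≤ ‖L‖ δ`, which is why `h δ = (‖L‖ + 1) δ` works. -/

open Asymptotics

section Taylor

variable {E F : Type*} [NormedAddCommGroup E] [NormedSpace ℝ E]
  [NormedAddCommGroup F] [NormedSpace ℝ F]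

theorem taylor_two_isLittleO {g : E → F} {z : E} (hg : Differentiable ℝ g)
    (hg' : DifferentiableAt ℝ (fderiv ℝ g) z) :
    (fun w => g (z + w) - g z - fderiv ℝ g z w - (2 : ℝ)⁻¹ • fderiv ℝ (fderiv ℝ g) z w w)
      =o[𝓝 0] fun w => ‖w‖ ^ 2 := by
  set B := fderiv ℝ (fderiv ℝ g) z
  refine isLittleO_iff.2 fun ε hε => ?_
  obtain ⟨r, hr, hB⟩ := Metric.eventually_nhds_iff_ball.1
    ((hasFDerivAt_iff_isLittleO_nhds_zero.1 hg'.hasFDerivAt).def hε)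
  filter_upwards [Metric.ball_mem_nhds 0 hr] with w hw
  set ψ : ℝ → F := fun t => g (z + t • w) - t • fderiv ℝ g z w - (t ^ 2 / 2) • B w w
  have hψ : ∀ t, HasDerivAt ψ ((fderiv ℝ g (z + t • w) - fderiv ℝ g z - B (t • w)) w) t := by
    intro t
    have hline : HasDerivAt (fun t : ℝ => z + t • w) w t := by
      simpa using ((hasDerivAt_id t).smul_const w).const_add z
    have := (((hg _).hasFDerivAt.comp_hasDerivAt t hline).sub
      ((hasDerivAt_id t).smul_const (fderiv ℝ g z w))).sub
      (((hasDerivAt_pow 2 t).div_const 2).smul_const (B w w))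
    convert this using 1
    · rfl
    · simp only [_root_.sub_apply, map_smul, _root_.smul_apply, one_smul]
      norm_num
  have hψ_le : ∀ t ∈ Set.Ico (0 : ℝ) 1,
      ‖(fderiv ℝ g (z + t • w) - fderiv ℝ g z - B (t • w)) w‖ ≤ ε * ‖w‖ ^ 2 := by
    intro t ht
    have htw : t • w ∈ Metric.ball (0 : E) r := by
      rw [mem_ball_zero_iff, norm_smul, Real.norm_of_nonneg ht.1] at *
      nlinarith [norm_nonneg w, ht.2]
    calc _ ≤ ‖fderiv ℝ g (z + t • w) - fderiv ℝ g z - B (t • w)‖ * ‖w‖ :=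
          ContinuousLinearMap.le_opNorm _ _
      _ ≤ ε * ‖t • w‖ * ‖w‖ := by gcongr; exact hB _ htw
      _ ≤ ε * ‖w‖ ^ 2 := by
        rw [norm_smul, Real.norm_of_nonneg ht.1]
        have := mul_le_mul_of_nonneg_left ht.2.le (mul_nonneg hε.le (sq_nonneg ‖w‖))
        nlinarith
  have := norm_image_sub_le_of_norm_deriv_le_segment' (fun t _ => (hψ t).hasDerivWithinAt)
    hψ_le 1 (Set.right_mem_Icc.2 zero_le_one)
  rw [Real.norm_of_nonneg (sq_nonneg ‖w‖), ← mul_one (ε * _), ← sub_zero (1 : ℝ)]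
  convert this using 2
  simp [ψ]
  abel

end Taylor

theorem Asymptotics.IsLittleO.comp_continuousLinearMap_norm_sq {V W G : Type*}
    [NormedAddCommGroup V] [NormedSpace ℝ V] [NormedAddCommGroup W] [NormedSpace ℝ W]
    [NormedAddCommGroup G] {R : W → G} (hR : R =o[𝓝 0] fun w => ‖w‖ ^ 2) (T : V →L[ℝ] W) :
    (fun v => R (T v)) =o[𝓝 0] fun v => ‖v‖ ^ 2 :=
  (hR.comp_tendsto (T.continuous.tendsto' 0 0 (map_zero T))).trans_isBigO
    ((T.isBigO_id _).norm_norm.pow 2)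

theorem eventually_nonneg_of_isLittleO_sub {α : Type*} {l : Filter α} {φ ψ g : α → ℝ} {c : ℝ}
    (hc : 0 < c) (h : (fun x => φ x - ψ x) =o[l] g) (hψ : ∀ x, c * ‖g x‖ ≤ ψ x) :
    ∀ᶠ x in l, 0 ≤ φ x := by
  filter_upwards [h.def hc] with x hx
  linarith [hψ x, (abs_le.1 (Real.norm_eq_abs _ ▸ hx)).1]

section LocalMinMax

variable {f : EuclideanSpace ℝ (Fin nx) → EuclideanSpace ℝ (Fin ny) → ℝ}
  {xs : EuclideanSpace ℝ (Fin nx)} {ys : EuclideanSpace ℝ (Fin ny)}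
  (L : EuclideanSpace ℝ (Fin nx) →L[ℝ] EuclideanSpace ℝ (Fin ny))

theorem isLocalMinMax_of_eventually_le (hmax : ∀ᶠ v in 𝓝 0, f xs (ys + v) ≤ f xs ys)
    (hmin : ∀ᶠ u in 𝓝 0, f xs ys ≤ f (xs + u) (ys + L u)) :
    IsLocalMinMax f xs ys := by
  obtain ⟨r₁, hr₁, hmax⟩ := Metric.eventually_nhds_iff_ball.1 hmax
  obtain ⟨r₂, hr₂, hmin⟩ := Metric.eventually_nhds_iff_ball.1 hmin
  set K := ‖L‖ + 1
  have hK : 0 < K := by positivity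
  refine ⟨min (r₁ / (2 * K)) (r₂ / 2), by positivity, fun δ => K * δ, fun δ hδ => by
    have := hδ.1; positivity, ?_, fun δ hδ x y hx hy => ⟨?_, ys + L (x - xs), ?_, ?_⟩⟩
  · simpa using ((continuous_const_mul K).tendsto 0).mono_left nhdsWithin_le_nhds
  · have hKδ : K * δ < r₁ := by
      have := mul_le_mul_of_nonneg_left (hδ.2.trans (min_le_left _ _)) hK.le
      rw [mul_div_assoc', mul_comm 2 K, mul_div_mul_left _ _ hK.ne'] at this
      linarith
    simpa using hmax (y - ys) (mem_ball_zero_iff.2 (hy.trans_lt hKδ))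
  · simpa using (L.le_opNorm _).trans (mul_le_mul (by linarith) hx (norm_nonneg _) hK.le)
  · have hδ₂ : δ < r₂ := by linarith [hδ.2.trans (min_le_right _ _)]
    simpa using hmin (x - xs) (mem_ball_zero_iff.2 (hx.trans_lt hδ₂))

theorem isLocalMinMax_of_quadratic_bounds
    {q : EuclideanSpace ℝ (Fin nx) × EuclideanSpace ℝ (Fin ny) → ℝ} {a b : ℝ} (ha : 0 < a)
    (hb : 0 < b)
    (hR : (fun w : EuclideanSpace ℝ (Fin nx) × EuclideanSpace ℝ (Fin ny) =>
      f (xs + w.1) (ys + w.2) - f xs ys - q w / 2) =o[𝓝 0] fun w => ‖w‖ ^ 2)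
    (hneg : ∀ v, q (0, v) ≤ -a * ‖v‖ ^ 2) (hpos : ∀ u, b * ‖u‖ ^ 2 ≤ q (u, L u)) :
    IsLocalMinMax f xs ys := by
  refine isLocalMinMax_of_eventually_le L ?_ ?_
  · have h := (hR.comp_continuousLinearMap_norm_sq (.inr ℝ _ _)).neg_left.congr_left
      (f₂ := fun v => (f xs ys - f xs (ys + v)) - -q (0, v) / 2) fun v => by simp; ring
    filter_upwards [eventually_nonneg_of_isLittleO_sub (half_pos ha) h fun v => by
      simp only [norm_pow, norm_norm]; linarith [hneg v]] with v hv
    linarith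
  · have h := (hR.comp_continuousLinearMap_norm_sq ((ContinuousLinearMap.id ℝ _).prod L)).congr_left
      (f₂ := fun u => (f (xs + u) (ys + L u) - f xs ys) - q (u, L u) / 2) fun u => by simp
    filter_upwards [eventually_nonneg_of_isLittleO_sub (half_pos hb) h fun u => by
      simp only [norm_pow, norm_norm]; linarith [hpos u]] with u hu
    linarith

end LocalMinMax

theorem exists_graph_quadratic_lower_bound {E F : Type*} [NormedAddCommGroup E]
    [NormedSpace ℝ E] [FiniteDimensional ℝ E] [NormedAddCommGroup F] [NormedSpace ℝ F]
    [FiniteDimensional ℝ F] {q : E × F → ℝ} {P : Submodule ℝ (E × F)} {c : ℝ} (hc : 0 < c)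
    (hP : Module.finrank ℝ P = Module.finrank ℝ E) (hpos : ∀ w ∈ P, c * ‖w‖ ^ 2 ≤ q w)
    (hneg : ∀ v, q (0, v) ≤ 0) :
    ∃ L : E →L[ℝ] F, ∀ u, c * ‖u‖ ^ 2 ≤ q (u, L u) := by
  set π : P →ₗ[ℝ] E := LinearMap.fst ℝ E F ∘ₗ P.subtype
  have hπ : Function.Injective π := by
    refine (injective_iff_map_eq_zero π).2 fun w hw => ?_
    have hq := (hpos w w.2).trans ((Prod.ext hw rfl : (w : E × F) = (0, (w : E × F).2)) ▸ hneg _)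
    have h0 : ‖(w : E × F)‖ ^ 2 = 0 := le_antisymm (by nlinarith) (sq_nonneg _)
    simpa using h0
  set e := π.linearEquivOfInjective hπ hP
  refine ⟨(LinearMap.snd ℝ E F ∘ₗ P.subtype ∘ₗ e.symm.toLinearMap).toContinuousLinearMap,
    fun u => ?_⟩
  have hu : (e.symm u : E × F).1 = u := by
    have := e.apply_symm_apply u
    rwa [LinearMap.linearEquivOfInjective_apply] at this
  calc c * ‖u‖ ^ 2 = c * ‖(e.symm u : E × F).1‖ ^ 2 := by rw [hu]
    _ ≤ c * ‖(e.symm u : E × F)‖ ^ 2 := by gcongr; exact norm_fst_le _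
    _ ≤ q (e.symm u) := hpos _ (e.symm u).2
    _ = q (u, _) := congrArg q (Prod.ext hu rfl)

theorem exists_pos_le_of_finite {κ : Type*} [Finite κ] {g : κ → ℝ} (hg : ∀ k, 0 < g k) :
    ∃ c > 0, ∀ k, c ≤ g k := by
  cases isEmpty_or_nonempty κ
  · exact ⟨1, one_pos, isEmptyElim⟩
  · obtain ⟨k₀, hk₀⟩ := Finite.exists_min g
    exact ⟨g k₀, hg k₀, hk₀⟩

section Inertia

variable {ι : Type*} [Fintype ι] [DecidableEq ι] {A : Matrix ι ι ℝ}

theorem Matrix.IsHermitian.dotProduct_mulVec_eq_sum (hA : A.IsHermitian)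
    (v : EuclideanSpace ℝ ι) :
    ⇑v ⬝ᵥ A *ᵥ ⇑v = ∑ k, hA.eigenvalues k * hA.eigenvectorBasis.repr v k ^ 2 := by
  set b := hA.eigenvectorBasis
  have hT := isSymmetric_toEuclideanLin_iff.2 hA
  have hb : ∀ k, toEuclideanLin A (b k) = hA.eigenvalues k • b k := fun k => by
    ext1; simp [toLpLin_apply, hA.mulVec_eigenvectorBasis, b]
  have hv : ⇑v ⬝ᵥ A *ᵥ ⇑v = inner ℝ (toEuclideanLin A v) v := by
    simp [EuclideanSpace.inner_eq_star_dotProduct, toLpLin_apply]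
  rw [hv, ← b.sum_inner_mul_inner]
  refine Finset.sum_congr rfl fun k _ => ?_
  rw [hT, hb, inner_smul_right, b.repr_apply_apply, real_inner_comm]
  ring

theorem HasInertia.exists_neg_bound {p z : ℕ} (h : HasInertia A (p, Fintype.card ι, z)) :
    ∃ c > 0, ∀ v : EuclideanSpace ℝ ι, ⇑v ⬝ᵥ A *ᵥ ⇑v ≤ -c * ‖v‖ ^ 2 := by
  obtain ⟨hA, -, hneg, -⟩ := h
  have hall : ∀ k, hA.eigenvalues k < 0 := fun k => by_contra fun hk =>
    (Fintype.card_subtype_lt (p := fun k => hA.eigenvalues k < 0) hk).ne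
      (by rwa [← Nat.card_eq_fintype_card])
  obtain ⟨c, hc, hle⟩ := exists_pos_le_of_finite fun k => neg_pos.2 (hall k)
  refine ⟨c, hc, fun v => ?_⟩
  rw [hA.dotProduct_mulVec_eq_sum, ← hA.eigenvectorBasis.repr.norm_map,
    EuclideanSpace.real_norm_sq_eq, Finset.mul_sum]
  gcongr with k
  nlinarith [hle k, sq_nonneg (hA.eigenvectorBasis.repr v k)]

theorem HasInertia.exists_subspace_pos_bound {t : ℕ × ℕ × ℕ} (h : HasInertia A t) :
    ∃ P : Submodule ℝ (EuclideanSpace ℝ ι), Module.finrank ℝ P = t.1 ∧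
      ∃ c > 0, ∀ v ∈ P, c * ‖v‖ ^ 2 ≤ ⇑v ⬝ᵥ A *ᵥ ⇑v := by
  obtain ⟨hA, hpos, -, -⟩ := h
  let b := hA.eigenvectorBasis
  refine ⟨Submodule.span ℝ (Set.range fun k : {k // 0 < hA.eigenvalues k} => b k), ?_, ?_⟩
  · exact (finrank_span_eq_card (b.orthonormal.linearIndependent.comp _
      Subtype.val_injective)).trans (Nat.card_eq_fintype_card.symm.trans hpos)
  obtain ⟨c, hc, hle⟩ := exists_pos_le_of_finite fun k : {k // 0 < hA.eigenvalues k} => k.2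
  refine ⟨c, hc, fun v hv => ?_⟩
  have hsupp : ∀ k, ¬ 0 < hA.eigenvalues k → b.repr v k = 0 := by
    obtain ⟨a, rfl⟩ := (Submodule.mem_span_range_iff_exists_fun ℝ).1 hv
    intro k hk
    simp only [map_sum, map_smul, b.repr_self, WithLp.ofLp_sum, WithLp.ofLp_smul,
      Finset.sum_apply, Pi.smul_apply, PiLp.ofLp_single, smul_eq_mul]
    exact Finset.sum_eq_zero fun j _ => by
      rw [Pi.single_apply, if_neg fun h : k = j => hk (h ▸ j.2), mul_zero]
  rw [hA.dotProduct_mulVec_eq_sum, ← b.repr.norm_map, EuclideanSpace.real_norm_sq_eq,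
    Finset.mul_sum]
  refine Finset.sum_le_sum fun k _ => ?_
  by_cases hk : 0 < hA.eigenvalues k
  · exact mul_le_mul_of_nonneg_right (hle ⟨k, hk⟩) (sq_nonneg _)
  · simp [b, hsupp k hk]

end Inertia

section SumEquivProd

variable {ι κ : Type*}

variable (ι κ) in
def euclideanSumEquivProd :
    EuclideanSpace ℝ (ι ⊕ κ) ≃ₗ[ℝ] EuclideanSpace ℝ ι × EuclideanSpace ℝ κ :=
  WithLp.linearEquiv 2 ℝ _ ≪≫ₗ LinearEquiv.sumArrowLequivProdArrow _ _ ℝ ℝ ≪≫ₗ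
    (WithLp.linearEquiv 2 ℝ _).symm.prodCongr (WithLp.linearEquiv 2 ℝ _).symm

theorem euclideanSumEquivProd_symm_apply (w : EuclideanSpace ℝ ι × EuclideanSpace ℝ κ) :
    ⇑((euclideanSumEquivProd ι κ).symm w) = ⇑w.1 ⊕ᵥ ⇑w.2 :=
  rfl

variable [Fintype ι] [Fintype κ]

theorem norm_le_norm_euclideanSumEquivProd_symm
    (w : EuclideanSpace ℝ ι × EuclideanSpace ℝ κ) :
    ‖w‖ ≤ ‖(euclideanSumEquivProd ι κ).symm w‖ := by
  have hsq : ‖(euclideanSumEquivProd ι κ).symm w‖ ^ 2 = ‖w.1‖ ^ 2 + ‖w.2‖ ^ 2 := by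
    simp [EuclideanSpace.real_norm_sq_eq, euclideanSumEquivProd_symm_apply,
      Fintype.sum_sum_type]
  refine le_of_sq_le_sq ?_ (norm_nonneg _)
  rw [hsq, Prod.norm_def]
  rcases max_choice ‖w.1‖ ‖w.2‖ with h | h <;> rw [h] <;>
    nlinarith [sq_nonneg ‖w.1‖, sq_nonneg ‖w.2‖]

theorem HasInertia.exists_subspace_pos_bound_prod [DecidableEq ι] [DecidableEq κ]
    {M : Matrix (ι ⊕ κ) (ι ⊕ κ) ℝ} {t : ℕ × ℕ × ℕ} (h : HasInertia M t)
    {q : EuclideanSpace ℝ ι × EuclideanSpace ℝ κ → ℝ}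
    (hq : ∀ w, q w = ⇑((euclideanSumEquivProd ι κ).symm w) ⬝ᵥ
      M *ᵥ ⇑((euclideanSumEquivProd ι κ).symm w)) :
    ∃ P : Submodule ℝ (EuclideanSpace ℝ ι × EuclideanSpace ℝ κ), Module.finrank ℝ P = t.1 ∧
      ∃ c > 0, ∀ w ∈ P, c * ‖w‖ ^ 2 ≤ q w := by
  set e := euclideanSumEquivProd ι κ
  obtain ⟨P, hP, c, hc, hpos⟩ := h.exists_subspace_pos_bound
  refine ⟨P.map (e : _ →ₗ[ℝ] _), by rw [LinearEquiv.finrank_map_eq, hP], c, hc, ?_⟩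
  rintro _ ⟨ζ, hζ, rfl⟩
  have hζ' : e.symm (e ζ) = ζ := e.symm_apply_apply ζ
  rw [hq]
  simp only [LinearEquiv.coe_coe, hζ']
  calc c * ‖e ζ‖ ^ 2 ≤ c * ‖ζ‖ ^ 2 := by
        gcongr; exact (norm_le_norm_euclideanSumEquivProd_symm (e ζ)).trans_eq (congrArg _ hζ')
    _ ≤ _ := hpos ζ hζ

end SumEquivProd

section PartialDerivatives

variable {E F G : Type*} [NormedAddCommGroup E] [NormedSpace ℝ E] [NormedAddCommGroup F]
  [NormedSpace ℝ F] [NormedAddCommGroup G] [NormedSpace ℝ G] {g : E × F → G} {x : E} {y : F}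

theorem fderiv_comp_prodMk_left (hg : DifferentiableAt ℝ g (x, y)) :
    fderiv ℝ (fun x' => g (x', y)) x = (fderiv ℝ g (x, y)).comp (.inl ℝ E F) :=
  (hg.hasFDerivAt.comp x (hasFDerivAt_prodMk_left x y)).fderiv

theorem fderiv_comp_prodMk_right (hg : DifferentiableAt ℝ g (x, y)) :
    fderiv ℝ (fun y' => g (x, y')) y = (fderiv ℝ g (x, y)).comp (.inr ℝ E F) :=
  (hg.hasFDerivAt.comp y (hasFDerivAt_prodMk_right x y)).fderiv

theorem fderiv_fderiv_apply_comp_prodMk_left (hg : DifferentiableAt ℝ (fderiv ℝ g) (x, y))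
    (u : E) (w : E × F) :
    fderiv ℝ (fun x' => fderiv ℝ g (x', y) w) x u = fderiv ℝ (fderiv ℝ g) (x, y) (u, 0) w :=
  DFunLike.congr_fun ((ContinuousLinearMap.apply ℝ G w).hasFDerivAt.comp x
    (hg.hasFDerivAt.comp x (hasFDerivAt_prodMk_left x y))).fderiv u

theorem fderiv_fderiv_apply_comp_prodMk_right (hg : DifferentiableAt ℝ (fderiv ℝ g) (x, y))
    (v : F) (w : E × F) :
    fderiv ℝ (fun y' => fderiv ℝ g (x, y') w) y v = fderiv ℝ (fderiv ℝ g) (x, y) (0, v) w :=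
  DFunLike.congr_fun ((ContinuousLinearMap.apply ℝ G w).hasFDerivAt.comp y
    (hg.hasFDerivAt.comp y (hasFDerivAt_prodMk_right x y))).fderiv v

theorem fderiv_eq_zero_of_partial_eq_zero (hg : DifferentiableAt ℝ g (x, y))
    (hx : fderiv ℝ (fun x' => g (x', y)) x = 0) (hy : fderiv ℝ (fun y' => g (x, y')) y = 0) :
    fderiv ℝ g (x, y) = 0 := by
  rw [← ContinuousLinearMap.coprod_comp_inl_inr (fderiv ℝ g (x, y)),
    ← fderiv_comp_prodMk_left hg, ← fderiv_comp_prodMk_right hg, hx, hy]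
  ext <;> simp

end PartialDerivatives

section Hessian

variable {f : EuclideanSpace ℝ (Fin nx) → EuclideanSpace ℝ (Fin ny) → ℝ}
  (xs : EuclideanSpace ℝ (Fin nx)) (ys : EuclideanSpace ℝ (Fin ny))

theorem pdX_eq (hf : Differentiable ℝ (Function.uncurry f)) (i : Fin nx) :
    pdX f xs ys i = fderiv ℝ (Function.uncurry f) (xs, ys) (EuclideanSpace.single i 1, 0) :=
  DFunLike.congr_fun (fderiv_comp_prodMk_left (g := Function.uncurry f) (hf _)) _

theorem pdY_eq (hf : Differentiable ℝ (Function.uncurry f)) (j : Fin ny) :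
    pdY f xs ys j = fderiv ℝ (Function.uncurry f) (xs, ys) (0, EuclideanSpace.single j 1) :=
  DFunLike.congr_fun (fderiv_comp_prodMk_right (g := Function.uncurry f) (hf _)) _

def stdBasisProd : Module.Basis (Fin nx ⊕ Fin ny) ℝ
    (EuclideanSpace ℝ (Fin nx) × EuclideanSpace ℝ (Fin ny)) :=
  (EuclideanSpace.basisFun (Fin nx) ℝ).toBasis.prod (EuclideanSpace.basisFun (Fin ny) ℝ).toBasis

variable {xs ys} in
theorem Hzz_eq_toMatrix₂ (hf : ContDiff ℝ 2 (Function.uncurry f)) :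
    Hzz f xs ys = LinearMap.toMatrix₂ stdBasisProd stdBasisProd
      (fderiv ℝ (fderiv ℝ (Function.uncurry f)) (xs, ys)).toLinearMap₁₂ := by
  have h1 : Differentiable ℝ (Function.uncurry f) := hf.differentiable two_ne_zero
  have h2 : DifferentiableAt ℝ (fderiv ℝ (Function.uncurry f)) (xs, ys) :=
    (hf.fderiv_right (m := 1) (by norm_num)).differentiable one_ne_zero _
  ext (i | i) (j | j) <;>
  simp [Hzz, Hxx, Hxy, Hyx, Hyy, stdBasisProd, pdX_eq _ _ h1, pdY_eq _ _ h1,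
    fderiv_fderiv_apply_comp_prodMk_left h2, fderiv_fderiv_apply_comp_prodMk_right h2]

theorem hessian_apply_eq_dotProduct_Hzz (hf : ContDiff ℝ 2 (Function.uncurry f))
    (w : EuclideanSpace ℝ (Fin nx) × EuclideanSpace ℝ (Fin ny)) :
    fderiv ℝ (fderiv ℝ (Function.uncurry f)) (xs, ys) w w =
      ⇑((euclideanSumEquivProd _ _).symm w) ⬝ᵥ
        Hzz f xs ys *ᵥ ⇑((euclideanSumEquivProd _ _).symm w) := by
  rw [Hzz_eq_toMatrix₂ hf]
  refine (apply_eq_dotProduct_toMatrix₂_mulVec stdBasisProd stdBasisProd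
    (fderiv ℝ (fderiv ℝ (Function.uncurry f)) (xs, ys)).toLinearMap₁₂ w w).trans ?_
  have hrepr : RingHom.id ℝ ∘ stdBasisProd.repr w = ⇑((euclideanSumEquivProd _ _).symm w) := by
    funext k
    rcases k with i | i <;> simp [stdBasisProd, euclideanSumEquivProd_symm_apply]
  rw [hrepr]

theorem hessian_apply_inr_eq_dotProduct_Hyy (hf : ContDiff ℝ 2 (Function.uncurry f))
    (v : EuclideanSpace ℝ (Fin ny)) :
    fderiv ℝ (fderiv ℝ (Function.uncurry f)) (xs, ys) (0, v) (0, v) =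
      ⇑v ⬝ᵥ Hyy f xs ys *ᵥ ⇑v := by
  rw [hessian_apply_eq_dotProduct_Hzz xs ys hf, euclideanSumEquivProd_symm_apply]
  simp [Hzz, fromBlocks_mulVec, sumElim_dotProduct_sumElim]

end Hessian

/-- **Second order sufficient condition for unconstrained minmax**: at a first-order
equilibrium, if `inertia(∇ᵧᵧf) = (0, n_y, 0)` and `inertia(∇_zz f) = (n_x, n_y, 0)`,
then the point is a local minmax. -/
theorem secondOrder_sufficient_unconstrained_minmax
    (f : EuclideanSpace ℝ (Fin nx) → EuclideanSpace ℝ (Fin ny) → ℝ)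
    (hf : ContDiff ℝ 2 (fun p : EuclideanSpace ℝ (Fin nx) × EuclideanSpace ℝ (Fin ny) =>
      f p.1 p.2))
    (xs : EuclideanSpace ℝ (Fin nx)) (ys : EuclideanSpace ℝ (Fin ny))
    (hgradx : gradient (fun x' => f x' ys) xs = 0)
    (hgrady : gradient (fun y' => f xs y') ys = 0)
    (hyy : HasInertia (Hyy f xs ys) (0, ny, 0))
    (hzz : HasInertia (Hzz f xs ys) (nx, ny, 0)) :
    IsLocalMinMax f xs ys := by
  have hf₁ : Differentiable ℝ (Function.uncurry f) := hf.differentiable two_ne_zero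
  have hf₂ : DifferentiableAt ℝ (fderiv ℝ (Function.uncurry f)) (xs, ys) :=
    (hf.fderiv_right (m := 1) (by norm_num)).differentiable one_ne_zero _
  have hcrit : fderiv ℝ (Function.uncurry f) (xs, ys) = 0 :=
    fderiv_eq_zero_of_partial_eq_zero (hf₁ _) (by simpa [gradient] using hgradx)
      (by simpa [gradient] using hgrady)
  set q := fun w => fderiv ℝ (fderiv ℝ (Function.uncurry f)) (xs, ys) w w
  obtain ⟨a, ha, hyy_le⟩ := HasInertia.exists_neg_bound (A := Hyy f xs ys)
    (by rwa [Fintype.card_fin])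
  have hneg : ∀ v, q (0, v) ≤ -a * ‖v‖ ^ 2 :=
    fun v => (hessian_apply_inr_eq_dotProduct_Hyy xs ys hf v).trans_le (hyy_le v)
  obtain ⟨P, hP, b, hb, hpos⟩ :=
    hzz.exists_subspace_pos_bound_prod (hessian_apply_eq_dotProduct_Hzz xs ys hf)
  obtain ⟨L, hL⟩ := exists_graph_quadratic_lower_bound hb (by simpa using hP) hpos
    fun v => (hneg v).trans (by nlinarith [sq_nonneg ‖v‖])
  refine isLocalMinMax_of_quadratic_bounds L ha hb ?_ hneg hL
  refine (taylor_two_isLittleO hf₁ hf₂).congr_left fun ⟨u, v⟩ => ?_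
  simp [q, hcrit]
  ring
end
end

section
/- Let A be an n_y × n_y real symmetric negative definite matrix, C an n_x × n_x real symmetric matrix, B an n_x × n_y real matrix with C − B A⁻¹ B' positive definite, and let g_x ∈ ℝ^{n_x}, g_y ∈ ℝ^{n_y}. Define the quadratic q(u, v) = g_x'u + g_y'v + u'Bv + ½ u'Cu + ½ v'Av. Then q has a unique global minmax point (u*, v*): the map v ↦ q(u*, v) attains its maximum over ℝ^{n_y} uniquely at v*, the map u ↦ max_v q(u, v) attains its minimum over ℝ^{n_x} uniquely at u*, and (u*; v*) = −[[C, B], [B', A]]⁻¹ (g_x; g_y). -/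
/-!
For fixed `u`, `q u` is a constant plus `b ⬝ᵥ v - ½ v ⬝ᵥ (-A) v` with `b = gy + Bᵀ u`, a strictly
concave quadratic, maximized exactly where `A v + Bᵀ u + gy = 0`, with value `½ b ⬝ᵥ v`.
Substituting, `⨆ v, q u v` is a constant plus `½ u ⬝ᵥ S u + (gx - B A⁻¹ gy) ⬝ᵥ u` for the Schur
complement `S = C - B A⁻¹ Bᵀ`, which is strictly convex and minimized exactly where
`C u + B v + gx = 0`. The two stationarity conditions are the block rows of
`[[C, B], [Bᵀ, A]] (u; v) = -(gx; gy)`, and that block matrix is invertible with determinant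
`det A * det S`.
-/

open Matrix

noncomputable section

def MatNegDef {ι : Type*} [Fintype ι] (A : Matrix ι ι ℝ) : Prop :=
  A.IsHermitian ∧ ∀ v : ι → ℝ, v ≠ 0 → v ⬝ᵥ A.mulVec v < 0

lemma MatNegDef.posDef_neg {ι : Type*} [Fintype ι] {A : Matrix ι ι ℝ} (hA : MatNegDef A) :
    (-A).PosDef :=
  .of_dotProduct_mulVec_pos hA.1.neg fun v hv => by
    simpa [neg_mulVec] using hA.2 v hv

lemma MatNegDef.isUnit_det {ι : Type*} [Fintype ι] [DecidableEq ι] {A : Matrix ι ι ℝ}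
    (hA : MatNegDef A) : IsUnit A.det := by
  simpa [det_neg] using hA.posDef_neg.det_pos.ne'.isUnit

namespace Matrix

variable {m n : Type*} [Fintype m] [Fintype n]

lemma dotProduct_mulVec_add_transpose_mulVec {R : Type*} [CommRing R] {M : Matrix n n R}
    (hM : M.IsSymm) (B : Matrix m n R) (x : n → R) (u : m → R) :
    (x + Bᵀ *ᵥ u) ⬝ᵥ M *ᵥ (x + Bᵀ *ᵥ u) =
      x ⬝ᵥ M *ᵥ x + 2 * (u ⬝ᵥ B *ᵥ M *ᵥ x) + u ⬝ᵥ (B * M * Bᵀ) *ᵥ u := by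
  have hB (w : n → R) : (Bᵀ *ᵥ u) ⬝ᵥ w = u ⬝ᵥ B *ᵥ w := by
    rw [dotProduct_comm, dotProduct_transpose_mulVec]
  have hMsymm (y w : n → R) : y ⬝ᵥ M *ᵥ w = w ⬝ᵥ M *ᵥ y := by
    simpa [hM.eq] using (dotProduct_transpose_mulVec M w y).symm
  rw [mulVec_add, dotProduct_add, add_dotProduct, add_dotProduct, hMsymm x (Bᵀ *ᵥ u), hB, hB,
    ← mulVec_mulVec, ← mulVec_mulVec]
  ring

lemma isUnit_det_fromBlocks [DecidableEq m] {l : Type*} [Fintype l] [DecidableEq l]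
    {R : Type*} [CommRing R]
    {A : Matrix m m R} {B : Matrix m l R} {C : Matrix l m R} {D : Matrix l l R}
    (hD : IsUnit D.det) (hS : IsUnit (A - B * D⁻¹ * C).det) :
    IsUnit (fromBlocks A B C D).det := by
  have := D.invertibleOfIsUnitDet hD
  rw [det_fromBlocks₂₂, invOf_eq_nonsing_inv]
  exact hD.mul hS

end Matrix

section ConcaveQuadratic

variable {n : Type*} [Fintype n]

def concaveQuadratic (P : Matrix n n ℝ) (b v : n → ℝ) : ℝ :=
  b ⬝ᵥ v - 2⁻¹ * (v ⬝ᵥ P *ᵥ v)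

variable {P : Matrix n n ℝ} {b v₀ : n → ℝ}

lemma concaveQuadratic_of_mulVec_eq (h : P *ᵥ v₀ = b) :
    concaveQuadratic P b v₀ = 2⁻¹ * (b ⬝ᵥ v₀) := by
  rw [concaveQuadratic, h, dotProduct_comm v₀]
  ring

lemma concaveQuadratic_sub_of_mulVec_eq (hP : P.IsHermitian) (h : P *ᵥ v₀ = b) (v : n → ℝ) :
    concaveQuadratic P b v₀ - concaveQuadratic P b v = 2⁻¹ * ((v - v₀) ⬝ᵥ P *ᵥ (v - v₀)) := by
  have hsymm : v₀ ⬝ᵥ P *ᵥ v = v ⬝ᵥ P *ᵥ v₀ := by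
    simpa [(isHermitian_iff_isSymm.1 hP).eq] using (dotProduct_transpose_mulVec P v v₀).symm
  subst h
  simp only [concaveQuadratic, mulVec_sub, sub_dotProduct, dotProduct_sub, hsymm,
    dotProduct_comm (P *ᵥ v₀)]
  ring

lemma concaveQuadratic_le_of_mulVec_eq (hP : P.PosSemidef) (h : P *ᵥ v₀ = b) (v : n → ℝ) :
    concaveQuadratic P b v ≤ concaveQuadratic P b v₀ := by
  have hgap := concaveQuadratic_sub_of_mulVec_eq hP.isHermitian h v
  have hnonneg := hP.dotProduct_mulVec_nonneg (v - v₀)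
  rw [star_trivial] at hnonneg
  linarith

lemma eq_of_concaveQuadratic_eq (hP : P.PosDef) (h : P *ᵥ v₀ = b) {v : n → ℝ}
    (hv : concaveQuadratic P b v = concaveQuadratic P b v₀) : v = v₀ := by
  by_contra hne
  have hgap := concaveQuadratic_sub_of_mulVec_eq hP.isHermitian h v
  have hpos := hP.dotProduct_mulVec_pos (sub_ne_zero.2 hne)
  rw [star_trivial] at hpos
  linarith

end ConcaveQuadratic

section MinmaxQuadratic

variable {m n : Type*} [Fintype m] [Fintype n]
  (C : Matrix m m ℝ) (B : Matrix m n ℝ) (A : Matrix n n ℝ) (gx : m → ℝ) (gy : n → ℝ)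

def minmaxQuadratic (u : m → ℝ) (v : n → ℝ) : ℝ :=
  gx ⬝ᵥ u + gy ⬝ᵥ v + u ⬝ᵥ B *ᵥ v + (1 / 2) * (u ⬝ᵥ C *ᵥ u) + (1 / 2) * (v ⬝ᵥ A *ᵥ v)

def bestResponse [DecidableEq n] (u : m → ℝ) : n → ℝ :=
  -(A⁻¹ *ᵥ (gy + Bᵀ *ᵥ u))

variable {C B A gx gy}

lemma minmaxQuadratic_eq_add_concaveQuadratic (u : m → ℝ) (v : n → ℝ) :
    minmaxQuadratic C B A gx gy u v =
      gx ⬝ᵥ u + 2⁻¹ * (u ⬝ᵥ C *ᵥ u) + concaveQuadratic (-A) (gy + Bᵀ *ᵥ u) v := by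
  rw [minmaxQuadratic, concaveQuadratic, add_dotProduct, dotProduct_comm (Bᵀ *ᵥ u),
    dotProduct_transpose_mulVec, neg_mulVec, dotProduct_neg]
  ring

variable [DecidableEq n]

lemma neg_mulVec_bestResponse (hA : IsUnit A.det) (u : m → ℝ) :
    (-A) *ᵥ bestResponse B A gy u = gy + Bᵀ *ᵥ u := by
  rw [bestResponse, neg_mulVec, mulVec_neg, neg_neg, mulVec_mulVec, mul_nonsing_inv _ hA,
    one_mulVec]

lemma minmaxQuadratic_le_bestResponse (hA : MatNegDef A) (u : m → ℝ) (v : n → ℝ) :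
    minmaxQuadratic C B A gx gy u v ≤ minmaxQuadratic C B A gx gy u (bestResponse B A gy u) := by
  simpa only [minmaxQuadratic_eq_add_concaveQuadratic, add_le_add_iff_left] using
    concaveQuadratic_le_of_mulVec_eq hA.posDef_neg.posSemidef
      (neg_mulVec_bestResponse hA.isUnit_det u) v

lemma eq_bestResponse_of_minmaxQuadratic_eq (hA : MatNegDef A) {u : m → ℝ} {v : n → ℝ}
    (h : minmaxQuadratic C B A gx gy u v =
      minmaxQuadratic C B A gx gy u (bestResponse B A gy u)) :
    v = bestResponse B A gy u := by
  simp only [minmaxQuadratic_eq_add_concaveQuadratic, add_right_inj] at h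
  exact eq_of_concaveQuadratic_eq hA.posDef_neg (neg_mulVec_bestResponse hA.isUnit_det u) h

lemma minmaxQuadratic_bestResponse (hA : A.IsHermitian) (hdet : IsUnit A.det) (u : m → ℝ) :
    minmaxQuadratic C B A gx gy u (bestResponse B A gy u) =
      -concaveQuadratic (C - B * A⁻¹ * Bᵀ) (B *ᵥ A⁻¹ *ᵥ gy - gx) u
        - 2⁻¹ * (gy ⬝ᵥ A⁻¹ *ᵥ gy) := by
  rw [minmaxQuadratic_eq_add_concaveQuadratic,
    concaveQuadratic_of_mulVec_eq (neg_mulVec_bestResponse hdet u), bestResponse, dotProduct_neg,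
    dotProduct_mulVec_add_transpose_mulVec (isHermitian_iff_isSymm.1 hA.inv)]
  simp only [concaveQuadratic, sub_mulVec, dotProduct_sub, sub_dotProduct,
    dotProduct_comm (B *ᵥ A⁻¹ *ᵥ gy)]
  ring

lemma iSup_minmaxQuadratic (hA : MatNegDef A) (u : m → ℝ) :
    ⨆ v, minmaxQuadratic C B A gx gy u v =
      -concaveQuadratic (C - B * A⁻¹ * Bᵀ) (B *ᵥ A⁻¹ *ᵥ gy - gx) u
        - 2⁻¹ * (gy ⬝ᵥ A⁻¹ *ᵥ gy) := by
  rw [ciSup_eq_of_forall_le_of_forall_lt_exists_gt (minmaxQuadratic_le_bestResponse hA u)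
    fun _ hw => ⟨_, hw⟩, minmaxQuadratic_bestResponse hA.1 hA.isUnit_det]

variable {us : m → ℝ}

lemma iSup_minmaxQuadratic_le (hA : MatNegDef A) (hS : (C - B * A⁻¹ * Bᵀ).PosSemidef)
    (hus : (C - B * A⁻¹ * Bᵀ) *ᵥ us = B *ᵥ A⁻¹ *ᵥ gy - gx) (u : m → ℝ) :
    ⨆ v, minmaxQuadratic C B A gx gy us v ≤ ⨆ v, minmaxQuadratic C B A gx gy u v := by
  rw [iSup_minmaxQuadratic hA, iSup_minmaxQuadratic hA]
  linarith [concaveQuadratic_le_of_mulVec_eq hS hus u]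

lemma eq_of_iSup_minmaxQuadratic_eq (hA : MatNegDef A) (hS : (C - B * A⁻¹ * Bᵀ).PosDef)
    (hus : (C - B * A⁻¹ * Bᵀ) *ᵥ us = B *ᵥ A⁻¹ *ᵥ gy - gx) {u : m → ℝ}
    (h : ⨆ v, minmaxQuadratic C B A gx gy u v = ⨆ v, minmaxQuadratic C B A gx gy us v) :
    u = us := by
  rw [iSup_minmaxQuadratic hA, iSup_minmaxQuadratic hA] at h
  exact eq_of_concaveQuadratic_eq hS hus (by linarith)

lemma fromBlocks_mulVec_bestResponse (hA : IsUnit A.det)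
    (hus : (C - B * A⁻¹ * Bᵀ) *ᵥ us = B *ᵥ A⁻¹ *ᵥ gy - gx) :
    fromBlocks C B Bᵀ A *ᵥ Sum.elim us (bestResponse B A gy us) = -Sum.elim gx gy := by
  have hresponse : (-A) *ᵥ bestResponse B A gy us = gy + Bᵀ *ᵥ us :=
    neg_mulVec_bestResponse hA us
  have hlower : Bᵀ *ᵥ us + A *ᵥ bestResponse B A gy us = -gy := by
    rw [neg_mulVec] at hresponse
    linear_combination -hresponse
  have hupper : C *ᵥ us + B *ᵥ bestResponse B A gy us = -gx := by
    rw [sub_mulVec, ← mulVec_mulVec, ← mulVec_mulVec] at hus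
    rw [bestResponse, mulVec_neg, mulVec_add, mulVec_add]
    linear_combination hus
  rw [fromBlocks_mulVec, Sum.elim_comp_inl, Sum.elim_comp_inr, hupper, hlower]
  ext (i | i) <;> rfl

end MinmaxQuadratic

theorem quadratic_minmax_wellPosed_general {nx ny : ℕ}
    (C : Matrix (Fin nx) (Fin nx) ℝ) (B : Matrix (Fin nx) (Fin ny) ℝ)
    (A : Matrix (Fin ny) (Fin ny) ℝ)
    (hA : MatNegDef A)
    (hSchur : (C - B * A⁻¹ * Bᵀ).PosDef)
    (gx : Fin nx → ℝ) (gy : Fin ny → ℝ) :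
    ∃ us : Fin nx → ℝ, ∃ vs : Fin ny → ℝ,
      letI q : (Fin nx → ℝ) → (Fin ny → ℝ) → ℝ := fun u v =>
        gx ⬝ᵥ u + gy ⬝ᵥ v + u ⬝ᵥ B.mulVec v +
          (1 / 2) * (u ⬝ᵥ C.mulVec u) + (1 / 2) * (v ⬝ᵥ A.mulVec v)
      -- the inner maximization is attained uniquely at `vs` :
      (∀ v, q us v ≤ q us vs) ∧ (∀ v, q us v = q us vs → v = vs) ∧
      -- the outer minimization of `u ↦ max_v q(u,v)` is attained uniquely at `us` :
      (∀ u, (⨆ v, q us v) ≤ ⨆ v, q u v) ∧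
      (∀ u, (⨆ v, q u v) = (⨆ v, q us v) → u = us) ∧
      -- the solution is the Newton step :
      Sum.elim us vs =
        -(Matrix.fromBlocks C B Bᵀ A)⁻¹.mulVec (Sum.elim gx gy) := by
  obtain ⟨us, hus⟩ := mulVec_surjective_iff_isUnit.2 hSchur.isUnit (B *ᵥ A⁻¹ *ᵥ gy - gx)
  have hMdet : IsUnit (fromBlocks C B Bᵀ A).det := 
    isUnit_det_fromBlocks hA.isUnit_det hSchur.det_pos.ne'.isUnit
  refine ⟨us, bestResponse B A gy us, minmaxQuadratic_le_bestResponse hA us,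
    fun _ => eq_bestResponse_of_minmaxQuadratic_eq hA,
    iSup_minmaxQuadratic_le hA hSchur.posSemidef hus,
    fun _ => eq_of_iSup_minmaxQuadratic_eq hA hSchur hus, ?_⟩
  rw [← mulVec_neg, ← fromBlocks_mulVec_bestResponse hA.isUnit_det hus, mulVec_mulVec,
    nonsing_inv_mul _ hMdet, one_mulVec]

/-- **Well-posedness of the local quadratic approximation for minmax**: if `A ≺ 0` and
`C − B A⁻¹ B' ≻ 0`, the quadratic `q(u,v) = g_x'u + g_y'v + u'Bv + ½u'Cu + ½v'Av`
has a unique global minmax point, given by the Newton step. -/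
theorem quadratic_minmax_wellPosed {nx ny : ℕ}
    (C : Matrix (Fin nx) (Fin nx) ℝ) (B : Matrix (Fin nx) (Fin ny) ℝ)
    (A : Matrix (Fin ny) (Fin ny) ℝ)
    (hC : C.IsHermitian) (hA : MatNegDef A)
    (hSchur : (C - B * A⁻¹ * Bᵀ).PosDef)
    (gx : Fin nx → ℝ) (gy : Fin ny → ℝ) :
    ∃ us : Fin nx → ℝ, ∃ vs : Fin ny → ℝ,
      letI q : (Fin nx → ℝ) → (Fin ny → ℝ) → ℝ := fun u v =>
        gx ⬝ᵥ u + gy ⬝ᵥ v + u ⬝ᵥ B.mulVec v +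
          (1 / 2) * (u ⬝ᵥ C.mulVec u) + (1 / 2) * (v ⬝ᵥ A.mulVec v)
      -- the inner maximization is attained uniquely at `vs` :
      (∀ v, q us v ≤ q us vs) ∧ (∀ v, q us v = q us vs → v = vs) ∧
      -- the outer minimization of `u ↦ max_v q(u,v)` is attained uniquely at `us` :
      (∀ u, (⨆ v, q us v) ≤ ⨆ v, q u v) ∧
      (∀ u, (⨆ v, q u v) = (⨆ v, q us v) → u = us) ∧
      -- the solution is the Newton step :
      Sum.elim us vs =
        -(Matrix.fromBlocks C B Bᵀ A)⁻¹.mulVec (Sum.elim gx gy) :=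
  quadratic_minmax_wellPosed_general C B A hA hSchur gx gy
end
end

section
/- Let H = [[C, B], [B', A]] be a real symmetric (n_x + n_y) × (n_x + n_y) matrix that is invertible with inertia(H) = (n_x, n_y, 0), and suppose the n_y × n_y block A is invertible but not negative definite (inertia(A) ≠ (0, n_y, 0)). Fix any ε_y > 0 such that A − ε_y·I is negative definite. Then there exists ε̄ ≥ 0 such that for every ε_x ≥ ε̄, setting E = diag(ε_x·I_{n_x}, −ε_y·I_{n_y}), one has inertia(H + E) = (n_x, n_y, 0) (so the LQAC holds) and there exists μ ∈ (0, 1) such that H + μ·E is singular. -/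
open Matrix

noncomputable section

/-
The inertia indices of a real symmetric matrix are those of its quadratic form: `n₊` (resp. `n₋`)
is the largest dimension of a subspace on which the form is positive (resp. negative) definite
(Sylvester's law of inertia, `sigPos`/`sigNeg`). For `ε_x` large the form of `H + E` is positive
on the `x`-coordinates and negative on the `y`-coordinates, which is the LQAC. Along the pencil
`t ↦ H + tE`, `n₋` is locally constant wherever the matrix is nonsingular, because eigenvalues
bounded away from `0` give definite subspaces with a uniform margin; at `t = 0` it is `n_y`. But for
a small `μ₀ > 0` with `μ₀ ε_x` large, the form of `H + μ₀E` is positive definite on the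
`x`-coordinates together with a positive subspace of `A`, which exists since `A` is invertible and
not negative definite. So `n₋(H + μ₀E) < n_y`, and some `H + tE` with `0 < t ≤ μ₀ < 1` is singular.
-/

open Module QuadraticForm Topology Filter

lemma add_two_mul_add_pos_of_sq_le {a b c α β γ : ℝ} (ha : 0 ≤ a) (hb : 0 ≤ b) (hab : 0 < a + b)
    (hα : 0 < α) (hβ : 0 < β) (hγ : γ < α * β) (hc : c ^ 2 ≤ γ * (a * b)) :
    0 < α * a + 2 * c + β * b := by
  have hs : 0 < α * a + β * b := by
    rcases ha.eq_or_lt with rfl | ha'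
    · nlinarith
    · nlinarith
  have hsq : (2 * c) ^ 2 < (α * a + β * b) ^ 2 := by
    rcases (mul_nonneg ha hb).eq_or_lt with h0 | h0
    · rw [← h0, mul_zero] at hc
      nlinarith [pow_pos hs 2]
    · nlinarith [sq_nonneg (α * a - β * b), mul_lt_mul_of_pos_right hγ h0]
  linarith [(abs_lt.1 (abs_lt_of_sq_lt_sq hsq hs.le)).1]

lemma le_sum_mul_sq_of_mem_spanSubset {ι : Type*} [Fintype ι] {s : Set ι} {w x : ι → ℝ} {c : ℝ}
    (hc : ∀ i ∈ s, c ≤ w i) (hx : x ∈ Pi.spanSubset ℝ s) :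
    c * ∑ i, x i ^ 2 ≤ ∑ i, w i * x i ^ 2 := by
  rw [Finset.mul_sum]
  refine Finset.sum_le_sum fun i _ => ?_
  by_cases hi : i ∈ s
  · exact mul_le_mul_of_nonneg_right (hc i hi) (sq_nonneg _)
  · simp [Pi.mem_spanSubset_iff.1 hx i hi]

lemma dotProduct_self_nonneg {ι : Type*} [Fintype ι] (v : ι → ℝ) : 0 ≤ v ⬝ᵥ v := by
  simpa using dotProduct_star_self_nonneg v

lemma dotProduct_self_pos {ι : Type*} [Fintype ι] {v : ι → ℝ} (hv : v ≠ 0) : 0 < v ⬝ᵥ v := by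
  simpa using dotProduct_star_self_pos_iff.2 hv

lemma dotProduct_add_smul_one_mulVec {ι : Type*} [Fintype ι] [DecidableEq ι]
    (P : Matrix ι ι ℝ) (c : ℝ) (x : ι → ℝ) :
    x ⬝ᵥ (P + c • 1) *ᵥ x = x ⬝ᵥ P *ᵥ x + c * (x ⬝ᵥ x) := by
  rw [add_mulVec, smul_mulVec, one_mulVec, dotProduct_add, dotProduct_smul, smul_eq_mul]

lemma abs_dotProduct_mulVec_le {ι : Type*} [Fintype ι] (M : Matrix ι ι ℝ) (v : ι → ℝ) :
    |v ⬝ᵥ M *ᵥ v| ≤ (∑ i, ∑ j, |M i j|) * (v ⬝ᵥ v) := by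
  have hsq (i : ι) : v i ^ 2 ≤ v ⬝ᵥ v := by
    simpa [dotProduct, pow_two] using
      Finset.single_le_sum (fun j _ => mul_self_nonneg (v j)) (Finset.mem_univ i)
  calc |v ⬝ᵥ M *ᵥ v| = |∑ i, ∑ j, v i * M i j * v j| := by
        simp [dotProduct, mulVec, Finset.mul_sum, mul_assoc]
    _ ≤ ∑ i, ∑ j, |v i * M i j * v j| :=
        (Finset.abs_sum_le_sum_abs _ _).trans
          (Finset.sum_le_sum fun i _ => Finset.abs_sum_le_sum_abs _ _)
    _ ≤ ∑ i, ∑ j, |M i j| * (v ⬝ᵥ v) := by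
        gcongr with i _ j _
        rw [abs_mul, abs_mul, mul_comm |v i|, mul_assoc]
        gcongr
        nlinarith [sq_abs (v i), sq_abs (v j), hsq i, hsq j, sq_nonneg (|v i| - |v j|)]
    _ = (∑ i, ∑ j, |M i j|) * (v ⬝ᵥ v) := by simp [Finset.sum_mul]

namespace Matrix.IsHermitian

variable {ι : Type*} [Fintype ι] [DecidableEq ι] {M : Matrix ι ι ℝ}

lemma exists_orthogonal_coords (hM : M.IsHermitian) :
    ∃ e : (ι → ℝ) ≃ₗ[ℝ] (ι → ℝ), ∀ v,
      v ⬝ᵥ M *ᵥ v = ∑ i, hM.eigenvalues i * e v i ^ 2 ∧ v ⬝ᵥ v = ∑ i, e v i ^ 2 := by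
  let U : Matrix ι ι ℝ := hM.eigenvectorUnitary
  have hconj : ∀ (X : Matrix ι ι ℝ) (v : ι → ℝ),
      v ⬝ᵥ (U * X * star U) *ᵥ v = (star U *ᵥ v) ⬝ᵥ X *ᵥ (star U *ᵥ v) := by
    intro X v
    rw [← mulVec_mulVec, ← mulVec_mulVec, dotProduct_mulVec, ← mulVec_transpose,
      ← conjTranspose_eq_transpose_of_trivial, ← star_eq_conjTranspose]
  refine ⟨UnitaryGroup.toLinearEquiv (star hM.eigenvectorUnitary), fun v => ⟨?_, ?_⟩⟩
  · conv_lhs => rw [hM.spectral_theorem, Unitary.conjStarAlgAut_apply]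
    rw [hconj]
    simp [dotProduct, mulVec_diagonal, UnitaryGroup.toLinearEquiv, U, pow_two, mul_left_comm]
  · have := hconj 1 v
    rw [Matrix.mul_one, show U * star U = 1 from Unitary.coe_mul_star_self _, one_mulVec,
      one_mulVec] at this
    rw [this]
    simp [dotProduct, UnitaryGroup.toLinearEquiv, U, pow_two]

lemma toQuadraticForm'_equivalent (hM : M.IsHermitian) :
    QuadraticMap.Equivalent M.toQuadraticForm'
      (QuadraticMap.weightedSumSquares ℝ hM.eigenvalues) := by
  obtain ⟨e, he⟩ := hM.exists_orthogonal_coords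
  exact ⟨⟨e, fun v => by
    simp [QuadraticMap.weightedSumSquares_apply, toQuadraticForm', toLinearMap₂'_apply',
      (he v).1, pow_two]⟩⟩

lemma sigPos_toQuadraticForm' (hM : M.IsHermitian) :
    sigPos M.toQuadraticForm' = Nat.card {i // 0 < hM.eigenvalues i} :=
  sigPos_of_equiv_weightedSumSquares hM.toQuadraticForm'_equivalent

lemma sigNeg_toQuadraticForm' (hM : M.IsHermitian) :
    sigNeg M.toQuadraticForm' = Nat.card {i // hM.eigenvalues i < 0} :=
  sigNeg_of_equiv_weightedSumSquares hM.toQuadraticForm'_equivalent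

lemma card_eigenvalues_pos_add_neg_add_zero (hM : M.IsHermitian) :
    Nat.card {i // 0 < hM.eigenvalues i} + Nat.card {i // hM.eigenvalues i < 0} +
      Nat.card {i // hM.eigenvalues i = 0} = Fintype.card ι := by
  classical
  simp only [Nat.card_eq_fintype_card]
  rw [← Fintype.card_subtype_or_disjoint, ← Fintype.card_subtype_or_disjoint]
  · exact Fintype.card_congr (Equiv.subtypeUnivEquiv fun i => by
      rcases lt_trichotomy (hM.eigenvalues i) 0 with h | h | h <;> simp [h])
  all_goals simp only [Pi.disjoint_iff, Prop.disjoint_iff]; grind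

lemma card_eigenvalues_eq_zero (hM : M.IsHermitian) (hdet : M.det ≠ 0) :
    Nat.card {i // hM.eigenvalues i = 0} = 0 := by
  rw [hM.det_eq_prod_eigenvalues] at hdet
  simpa [Finset.prod_ne_zero_iff, Fintype.card_eq_zero_iff, isEmpty_subtype] using hdet

lemma sigPos_add_sigNeg_toQuadraticForm' (hM : M.IsHermitian) (hdet : M.det ≠ 0) :
    sigPos M.toQuadraticForm' + sigNeg M.toQuadraticForm' = Fintype.card ι := by
  rw [hM.sigPos_toQuadraticForm', hM.sigNeg_toQuadraticForm', ← add_zero (_ + _),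
    ← hM.card_eigenvalues_eq_zero hdet, hM.card_eigenvalues_pos_add_neg_add_zero]

lemma exists_uniformly_definite_subspaces (hM : M.IsHermitian) : ∃ δ > 0,
    (∃ V : Submodule ℝ (ι → ℝ), finrank ℝ V = sigPos M.toQuadraticForm' ∧
      ∀ v ∈ V, δ * (v ⬝ᵥ v) ≤ v ⬝ᵥ M *ᵥ v) ∧
    (∃ W : Submodule ℝ (ι → ℝ), finrank ℝ W = sigNeg M.toQuadraticForm' ∧
      ∀ v ∈ W, v ⬝ᵥ M *ᵥ v ≤ -δ * (v ⬝ᵥ v)) := by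
  obtain ⟨e, he⟩ := hM.exists_orthogonal_coords
  obtain ⟨δ, hδle, hδ⟩ : ∃ δ, (∀ i, hM.eigenvalues i ≠ 0 → δ ≤ |hM.eigenvalues i|) ∧ 0 < δ := by
    refine (Eventually.and (eventually_all.2 fun i => ?_)
      self_mem_nhdsWithin).exists (f := 𝓝[>] (0 : ℝ))
    by_cases h : hM.eigenvalues i = 0
    · simp [h]
    · exact ((eventually_le_nhds (abs_pos.2 h)).filter_mono nhdsWithin_le_nhds).mono
        fun _ h' _ => h'
  have hdim (s : Set ι) : finrank ℝ ((Pi.spanSubset ℝ s).comap e.toLinearMap) = s.ncard := by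
    rw [Submodule.comap_equiv_eq_map_symm, LinearEquiv.finrank_map_eq, Pi.dim_spanSubset]
  refine ⟨δ, hδ, ⟨_, (hdim _).trans hM.sigPos_toQuadraticForm'.symm, fun v hv => ?_⟩,
    ⟨_, (hdim _).trans hM.sigNeg_toQuadraticForm'.symm, fun v hv => ?_⟩⟩
  · rw [(he v).1, (he v).2]
    exact le_sum_mul_sq_of_mem_spanSubset
      (fun i (hi : 0 < hM.eigenvalues i) => (hδle i hi.ne').trans (abs_of_pos hi).le) hv
  · have := le_sum_mul_sq_of_mem_spanSubset (w := -hM.eigenvalues)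
      (fun i (hi : hM.eigenvalues i < 0) => (hδle i hi.ne).trans (abs_of_neg hi).le) hv
    rw [(he v).1, (he v).2]
    simp only [Pi.neg_apply, neg_mul, Finset.sum_neg_distrib, LinearEquiv.coe_coe] at this
    linarith

lemma hasInertia_of_le_sigPos_of_le_sigNeg (hM : M.IsHermitian) {p q : ℕ}
    (hp : p ≤ sigPos M.toQuadraticForm') (hq : q ≤ sigNeg M.toQuadraticForm')
    (hpq : p + q = Fintype.card ι) : HasInertia M (p, q, 0) := by
  rw [hM.sigPos_toQuadraticForm'] at hp
  rw [hM.sigNeg_toQuadraticForm'] at hq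
  have := hM.card_eigenvalues_pos_add_neg_add_zero
  exact ⟨hM, by dsimp only; omega, by dsimp only; omega, by dsimp only; omega⟩

end Matrix.IsHermitian

lemma HasInertia.sigPos_pos {ι : Type*} [Fintype ι] [DecidableEq ι] {A : Matrix ι ι ℝ}
    {t : ℕ × ℕ × ℕ} (h : HasInertia A t) (hdet : A.det ≠ 0) (ht : t ≠ (0, Fintype.card ι, 0)) :
    0 < sigPos A.toQuadraticForm' := by
  obtain ⟨hA, hp, hq, hz⟩ := h
  have := hA.card_eigenvalues_pos_add_neg_add_zero
  have := hA.card_eigenvalues_eq_zero hdet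
  rw [hA.sigPos_toQuadraticForm', hp]
  obtain ⟨p, q, z⟩ := t
  dsimp only at hp hq hz ⊢
  by_contra h0
  exact ht (by simp only [Prod.mk.injEq]; omega)

namespace Matrix

variable {ι : Type*} [Fintype ι] [DecidableEq ι]

lemma le_sigPos_toQuadraticForm' {M : Matrix ι ι ℝ} {V : Submodule ℝ (ι → ℝ)}
    (hV : ∀ v ∈ V, v ≠ 0 → 0 < v ⬝ᵥ M *ᵥ v) : finrank ℝ V ≤ sigPos M.toQuadraticForm' :=
  le_sigPos_of_posDef _ fun v hv => by
    simpa [toQuadraticForm', toLinearMap₂'_apply'] using hV v v.2 (by simpa using hv)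

lemma le_sigNeg_toQuadraticForm' {M : Matrix ι ι ℝ} {V : Submodule ℝ (ι → ℝ)}
    (hV : ∀ v ∈ V, v ≠ 0 → v ⬝ᵥ M *ᵥ v < 0) : finrank ℝ V ≤ sigNeg M.toQuadraticForm' :=
  le_sigNeg_of_negDef _ fun v hv => by
    simpa [toQuadraticForm', toLinearMap₂'_apply'] using hV v v.2 (by simpa using hv)

lemma sigPos_add_sigNeg_toQuadraticForm'_le (M : Matrix ι ι ℝ) :
    sigPos M.toQuadraticForm' + sigNeg M.toQuadraticForm' ≤ Fintype.card ι := by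
  have := sigPos_add_sigNeg_add_radical (Q := M.toQuadraticForm')
  rw [finrank_fintype_fun_eq_card] at this
  omega

lemma IsHermitian.eventually_sigNeg_eq {M : Matrix ι ι ℝ} (hM : M.IsHermitian)
    (hdet : M.det ≠ 0) :
    ∀ᶠ N in 𝓝 M, sigNeg N.toQuadraticForm' = sigNeg M.toQuadraticForm' := by
  obtain ⟨δ, hδ, ⟨V, hV, hVM⟩, ⟨W, hW, hWM⟩⟩ := hM.exists_uniformly_definite_subspaces
  have hlim : Tendsto (fun N : Matrix ι ι ℝ => ∑ i, ∑ j, |(N - M) i j|) (𝓝 M) (𝓝 0) := by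
    have hcont : Continuous fun N : Matrix ι ι ℝ => ∑ i, ∑ j, |(N - M) i j| := by
      simp only [sub_apply]; fun_prop
    simpa using hcont.tendsto M
  -- near `M` the quadratic form moves by less than the margin `δ`, so the definite subspaces of `M`
  -- stay definite for `N`; as `M` is nonsingular their dimensions already fill the whole space.
  filter_upwards [hlim.eventually (gt_mem_nhds hδ)] with N hN
  have hquad : ∀ v ≠ 0, |v ⬝ᵥ N *ᵥ v - v ⬝ᵥ M *ᵥ v| < δ * (v ⬝ᵥ v) := fun v hv => by
    rw [← dotProduct_sub, ← sub_mulVec]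
    exact (abs_dotProduct_mulVec_le _ v).trans_lt
      (mul_lt_mul_of_pos_right hN (dotProduct_self_pos hv))
  have hpos := le_sigPos_toQuadraticForm' (M := N) (V := V) fun v hv hv0 => by
    have := hVM v hv; have := abs_lt.1 (hquad v hv0); linarith
  have hneg := le_sigNeg_toQuadraticForm' (M := N) (V := W) fun v hv hv0 => by
    have := hWM v hv; have := abs_lt.1 (hquad v hv0); linarith
  have := N.sigPos_add_sigNeg_toQuadraticForm'_le
  have := hM.sigPos_add_sigNeg_toQuadraticForm' hdet
  omega

lemma sigNeg_eq_of_continuous {M : ℝ → Matrix ι ι ℝ} (hMc : Continuous M)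
    (hM : ∀ t, (M t).IsHermitian) {a b : ℝ} (hab : a ≤ b)
    (hdet : ∀ t ∈ Set.Icc a b, (M t).det ≠ 0) :
    sigNeg (M a).toQuadraticForm' = sigNeg (M b).toQuadraticForm' := by
  refine isPreconnected_Icc.constant (f := fun t => sigNeg (M t).toQuadraticForm')
    (fun t ht => ContinuousAt.continuousWithinAt ?_) ⟨le_rfl, hab⟩ ⟨hab, le_rfl⟩
  rw [ContinuousAt, nhds_discrete ℕ, tendsto_pure]
  exact (hMc.tendsto t).eventually ((hM t).eventually_sigNeg_eq (hdet t ht))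

lemma exists_det_eq_zero_of_sigPos_lt {M E : Matrix ι ι ℝ} (hM : M.IsHermitian)
    (hE : E.IsHermitian) (hdet : M.det ≠ 0) {μ : ℝ} (hμ : 0 ≤ μ)
    (hlt : sigPos M.toQuadraticForm' < sigPos (M + μ • E).toQuadraticForm') :
    ∃ t ∈ Set.Ioc 0 μ, (M + t • E).det = 0 := by
  by_contra! hreg
  have hneg := sigNeg_eq_of_continuous (M := fun t => M + t • E) (by fun_prop)
    (fun t => hM.add (hE.smul (IsSelfAdjoint.all t))) hμ fun t ht => by
      rcases ht.1.eq_or_lt with rfl | ht0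
      · simpa using hdet
      · exact hreg t ⟨ht0, ht.2⟩
  simp only [zero_smul, add_zero] at hneg
  have := (M + μ • E).sigPos_add_sigNeg_toQuadraticForm'_le
  have := hM.sigPos_add_sigNeg_toQuadraticForm' hdet
  omega

end Matrix

section Blocks

variable {m n : Type*}

def sumSubspace (U : Submodule ℝ (m → ℝ)) (W : Submodule ℝ (n → ℝ)) :
    Submodule ℝ (m ⊕ n → ℝ) :=
  (U.prod W).map (LinearEquiv.sumArrowLequivProdArrow m n ℝ ℝ).symm.toLinearMap

lemma exists_sumElim_of_mem_sumSubspace {U : Submodule ℝ (m → ℝ)} {W : Submodule ℝ (n → ℝ)}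
    {v : m ⊕ n → ℝ} (hv : v ∈ sumSubspace U W) : ∃ x ∈ U, ∃ y ∈ W, v = Sum.elim x y := by
  obtain ⟨⟨x, y⟩, ⟨hx, hy⟩, rfl⟩ := hv
  exact ⟨x, hx, y, hy, rfl⟩

lemma fromBlocks_add_diagonal_sumElim [DecidableEq m] [DecidableEq n] (P : Matrix m m ℝ)
    (Q : Matrix m n ℝ) (R : Matrix n m ℝ) (S : Matrix n n ℝ) (a b : ℝ) :
    fromBlocks P Q R S + diagonal (Sum.elim (fun _ : m => a) (fun _ : n => b)) =
      fromBlocks (P + a • 1) Q R (S + b • 1) := by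
  rw [← fromBlocks_diagonal, fromBlocks_add, add_zero, add_zero, smul_one_eq_diagonal,
    smul_one_eq_diagonal]

lemma smul_diagonal_sumElim [DecidableEq m] [DecidableEq n] (t a b : ℝ) :
    t • diagonal (Sum.elim (fun _ : m => a) (fun _ : n => b)) =
      diagonal (Sum.elim (fun _ : m => t * a) (fun _ : n => t * b)) := by
  rw [← diagonal_smul]
  congr 1
  ext (i | i) <;> simp

variable [Fintype m] [Fintype n]

lemma finrank_sumSubspace (U : Submodule ℝ (m → ℝ)) (W : Submodule ℝ (n → ℝ)) :
    finrank ℝ (sumSubspace U W) = finrank ℝ U + finrank ℝ W := by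
  have hprod : U.prod W = LinearMap.range (U.subtype.prodMap W.subtype) := by
    rw [LinearMap.range_prodMap, U.range_subtype, W.range_subtype]
  rw [sumSubspace, LinearEquiv.finrank_map_eq, hprod, LinearMap.finrank_range_of_inj
    (Prod.map_injective.2 ⟨U.injective_subtype, W.injective_subtype⟩), finrank_prod]

lemma sumElim_dotProduct_fromBlocks_mulVec (P : Matrix m m ℝ) (B : Matrix m n ℝ)
    (S : Matrix n n ℝ) (x : m → ℝ) (y : n → ℝ) :
    Sum.elim x y ⬝ᵥ fromBlocks P B Bᵀ S *ᵥ Sum.elim x y =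
      x ⬝ᵥ P *ᵥ x + 2 * (x ⬝ᵥ B *ᵥ y) + y ⬝ᵥ S *ᵥ y := by
  rw [fromBlocks_mulVec, sumElim_dotProduct_sumElim, Sum.elim_comp_inl, Sum.elim_comp_inr,
    mulVec_transpose, dotProduct_add, dotProduct_add, dotProduct_comm y, ← dotProduct_mulVec]
  ring

variable [DecidableEq m] [DecidableEq n]

lemma hasInertia_fromBlocks {P : Matrix m m ℝ} {B : Matrix m n ℝ} {S : Matrix n n ℝ}
    (hH : (fromBlocks P B Bᵀ S).IsHermitian) (hP : ∀ x ≠ 0, 0 < x ⬝ᵥ P *ᵥ x)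
    (hS : ∀ y ≠ 0, y ⬝ᵥ S *ᵥ y < 0) :
    HasInertia (fromBlocks P B Bᵀ S) (Fintype.card m, Fintype.card n, 0) := by
  refine hH.hasInertia_of_le_sigPos_of_le_sigNeg ?_ ?_ (Fintype.card_sum ..).symm
  · have := le_sigPos_toQuadraticForm' (M := fromBlocks P B Bᵀ S) (V := sumSubspace ⊤ ⊥)
      fun v hv hv0 => by
        obtain ⟨x, -, y, hy, rfl⟩ := exists_sumElim_of_mem_sumSubspace hv
        rw [(Submodule.mem_bot ℝ).1 hy] at hv0 ⊢
        simpa [sumElim_dotProduct_fromBlocks_mulVec] using hP x (by rintro rfl; simp at hv0)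
    simpa [finrank_sumSubspace] using this
  · have := le_sigNeg_toQuadraticForm' (M := fromBlocks P B Bᵀ S) (V := sumSubspace ⊥ ⊤)
      fun v hv hv0 => by
        obtain ⟨x, hx, y, -, rfl⟩ := exists_sumElim_of_mem_sumSubspace hv
        rw [(Submodule.mem_bot ℝ).1 hx] at hv0 ⊢
        simpa [sumElim_dotProduct_fromBlocks_mulVec] using hS y (by rintro rfl; simp at hv0)
    simpa [finrank_sumSubspace] using this

lemma card_add_finrank_le_sigPos_fromBlocks {P : Matrix m m ℝ} {B : Matrix m n ℝ}
    {S : Matrix n n ℝ} {V : Submodule ℝ (n → ℝ)} {α β γ : ℝ} (hα : 0 < α) (hβ : 0 < β)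
    (hγ : γ < α * β) (hP : ∀ x, α * (x ⬝ᵥ x) ≤ x ⬝ᵥ P *ᵥ x)
    (hB : ∀ y, (B *ᵥ y) ⬝ᵥ (B *ᵥ y) ≤ γ * (y ⬝ᵥ y)) (hS : ∀ y ∈ V, β * (y ⬝ᵥ y) ≤ y ⬝ᵥ S *ᵥ y) :
    Fintype.card m + finrank ℝ V ≤ sigPos (fromBlocks P B Bᵀ S).toQuadraticForm' := by
  have := le_sigPos_toQuadraticForm' (M := fromBlocks P B Bᵀ S) (V := sumSubspace ⊤ V)
    fun v hv hv0 => by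
      obtain ⟨x, -, y, hy, rfl⟩ := exists_sumElim_of_mem_sumSubspace hv
      have hxy := dotProduct_self_pos hv0
      rw [sumElim_dotProduct_sumElim] at hxy
      have hcs : (x ⬝ᵥ B *ᵥ y) ^ 2 ≤ (x ⬝ᵥ x) * ((B *ᵥ y) ⬝ᵥ (B *ᵥ y)) := by
        simpa [dotProduct, pow_two] using Finset.sum_mul_sq_le_sq_mul_sq Finset.univ x (B *ᵥ y)
      have hform := add_two_mul_add_pos_of_sq_le (dotProduct_self_nonneg x)
        (dotProduct_self_nonneg y) hxy hα hβ hγ (hcs.trans (by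
          nlinarith [hB y, dotProduct_self_nonneg x]))
      rw [sumElim_dotProduct_fromBlocks_mulVec]
      linarith [hP x, hS y hy]
  simpa [finrank_sumSubspace] using this

lemma eventually_hasInertia_fromBlocks_add_diagonal {C : Matrix m m ℝ} {B : Matrix m n ℝ}
    {A : Matrix n n ℝ} (hH : (fromBlocks C B Bᵀ A).IsHermitian) {b : ℝ}
    (hA : ∀ y ≠ 0, y ⬝ᵥ A *ᵥ y + b * (y ⬝ᵥ y) < 0) :
    ∀ᶠ a in atTop,
      HasInertia (fromBlocks C B Bᵀ A + diagonal (Sum.elim (fun _ => a) (fun _ => b)))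
        (Fintype.card m, Fintype.card n, 0) := by
  filter_upwards [eventually_gt_atTop (∑ i, ∑ j, |C i j|)] with a ha
  have hHE := hH.add (isHermitian_diagonal (Sum.elim (fun _ : m => a) (fun _ : n => b)))
  rw [fromBlocks_add_diagonal_sumElim] at hHE ⊢
  refine hasInertia_fromBlocks hHE (fun x hx => ?_) (fun y hy => ?_)
  · rw [dotProduct_add_smul_one_mulVec]
    nlinarith [(abs_le.1 (abs_dotProduct_mulVec_le C x)).1,
      mul_pos (sub_pos.2 ha) (dotProduct_self_pos hx)]
  · rw [dotProduct_add_smul_one_mulVec]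
    exact hA y hy

lemma eventually_card_add_finrank_le_sigPos_fromBlocks_add_diagonal (C : Matrix m m ℝ)
    (B : Matrix m n ℝ) {A : Matrix n n ℝ} {V : Submodule ℝ (n → ℝ)} {δ b : ℝ}
    (hV : ∀ y ∈ V, δ * (y ⬝ᵥ y) ≤ y ⬝ᵥ A *ᵥ y) (hb : 0 < δ + b) :
    ∀ᶠ a in atTop, Fintype.card m + finrank ℝ V ≤
      sigPos (fromBlocks C B Bᵀ A +
        diagonal (Sum.elim (fun _ => a) (fun _ => b))).toQuadraticForm' := by
  set mC := ∑ i, ∑ j, |C i j|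
  set mBB := ∑ i, ∑ j, |(Bᵀ * B) i j|
  have hB (y : n → ℝ) : (B *ᵥ y) ⬝ᵥ (B *ᵥ y) ≤ mBB * (y ⬝ᵥ y) := by
    rw [dotProduct_mulVec, ← mulVec_transpose, mulVec_mulVec, dotProduct_comm]
    exact (le_abs_self _).trans (abs_dotProduct_mulVec_le _ y)
  filter_upwards [eventually_gt_atTop (mC + mBB / (δ + b))] with a ha
  have : 0 ≤ mBB / (δ + b) := by positivity
  rw [fromBlocks_add_diagonal_sumElim]
  refine card_add_finrank_le_sigPos_fromBlocks (α := a - mC) (by linarith) hb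
    ((div_lt_iff₀ hb).1 (by linarith)) (fun x => ?_) hB (fun y hy => ?_)
  · rw [dotProduct_add_smul_one_mulVec, sub_mul]
    linarith [(abs_le.1 (abs_dotProduct_mulVec_le C x)).1]
  · rw [dotProduct_add_smul_one_mulVec, add_mul]
    linarith [hV y hy]

end Blocks

/-- **Forcing instability in the hard case**: if `H = [[C, B],[B', A]]` is invertible with
inertia `(n_x, n_y, 0)` but `A` is invertible and not negative definite, then for any fixed
`ε_y > 0` with `A − ε_y·I ≺ 0` there is `ε̄ ≥ 0` such that for all `ε_x ≥ ε̄`, setting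
`E = diag(ε_x·I, −ε_y·I)`, the LQAC holds (`inertia(H+E) = (n_x, n_y, 0)`) and `H + μ·E`
is singular for some `μ ∈ (0,1)`. -/
theorem exists_large_epsx_forcing_singularity {nx ny : ℕ}
    (C : Matrix (Fin nx) (Fin nx) ℝ) (B : Matrix (Fin nx) (Fin ny) ℝ)
    (A : Matrix (Fin ny) (Fin ny) ℝ)
    (hH : (Matrix.fromBlocks C B Bᵀ A).IsHermitian)
    (hHinv : IsUnit (Matrix.fromBlocks C B Bᵀ A).det)
    (hHinertia : HasInertia (Matrix.fromBlocks C B Bᵀ A) (nx, ny, 0))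
    (hAinv : IsUnit A.det)
    (hAnotneg : ∃ t : ℕ × ℕ × ℕ, t ≠ (0, ny, 0) ∧ HasInertia A t)
    (εy : ℝ) (hεy : 0 < εy)
    (hεyneg : MatNegDef (A - εy • (1 : Matrix (Fin ny) (Fin ny) ℝ))) :
    ∃ εbar : ℝ, 0 ≤ εbar ∧ ∀ εx : ℝ, εbar ≤ εx →
      HasInertia (Matrix.fromBlocks C B Bᵀ A +
          Matrix.diagonal (Sum.elim (fun _ : Fin nx => εx) (fun _ : Fin ny => -εy)))
        (nx, ny, 0) ∧
      ∃ μ ∈ Set.Ioo (0 : ℝ) 1,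
        (Matrix.fromBlocks C B Bᵀ A +
            μ • Matrix.diagonal (Sum.elim (fun _ : Fin nx => εx) (fun _ : Fin ny => -εy))).det
          = 0 := by
  obtain ⟨t, hne, hAt⟩ := hAnotneg
  have hpA := hAt.sigPos_pos hAinv.ne_zero (by simpa using hne)
  obtain ⟨δA, hδA, ⟨VA, hVA, hVAq⟩, -⟩ := hAt.fst.exists_uniformly_definite_subspaces
  set μ₀ := min (1 / 2) (δA / (2 * εy))
  have hμ₀ : 0 < μ₀ := by positivity
  have hμ₀εy : μ₀ * εy < δA := by
    calc μ₀ * εy ≤ δA / (2 * εy) * εy := by gcongr; exact min_le_right _ _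
      _ < δA := by field_simp; linarith
  have hLQAC := eventually_hasInertia_fromBlocks_add_diagonal hH (b := -εy) fun y hy => by
    simpa [sub_eq_add_neg, ← neg_smul, dotProduct_add_smul_one_mulVec] using hεyneg.2 y hy
  have hpos := (tendsto_id.const_mul_atTop hμ₀).eventually
    (eventually_card_add_finrank_le_sigPos_fromBlocks_add_diagonal C B hVAq
      (b := μ₀ * -εy) (by linarith))
  obtain ⟨εbar, hεbar⟩ := eventually_atTop.1 (hLQAC.and hpos)
  refine ⟨max εbar 0, le_max_right _ _, fun εx hεx => ?_⟩
  obtain ⟨hinertia, hμ₀pos⟩ := hεbar εx (le_of_max_le_left hεx)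
  refine ⟨by simpa using hinertia, ?_⟩
  obtain ⟨hH', hHpos, -, -⟩ := hHinertia
  obtain ⟨s, ⟨hs0, hsμ₀⟩, hs⟩ := exists_det_eq_zero_of_sigPos_lt hH
    (isHermitian_diagonal (Sum.elim (fun _ : Fin nx => εx) (fun _ => -εy))) hHinv.ne_zero hμ₀.le
    (by rw [smul_diagonal_sumElim, hH'.sigPos_toQuadraticForm', hHpos]
        simp only [Fintype.card_fin, id] at hμ₀pos
        omega)
  exact ⟨s, ⟨hs0, hsμ₀.trans_lt ((min_le_left _ _).trans_lt (by norm_num))⟩, hs⟩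
end
end
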